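/- arXiv:0708.2307 — 13 statements merged into one kernel-verified Lean document; each statement's English description precedes it below -/
import Mathlib

section
/- Let P_1, ..., P_s be nonzero polynomials in ℂ[T] with product P = P_1 ⋯ P_s. Then e^{-deg(P)} ‖P‖ ≤ ‖P_1‖ ⋯ ‖P_s‖ ≤ e^{deg(P)} ‖P‖, where ‖·‖ denotes the maximum of the absolute values of the coefficients. -/
/-!
For the lower bound, `‖p * q‖ ≤ (deg p + 1) ‖p‖ ‖q‖` because each coefficient of `p * q` is a sum
of at most `deg p + 1` products of coefficients; iterating and using `∏ (dᵢ + 1) ≤ e ^ ∑ dᵢ` gives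
`‖P‖ ≤ e ^ deg P * ∏ ‖Pᵢ‖`.

For the upper bound we pass through the multiplicative Mahler measure `M`. Writing the coefficients
as elementary symmetric functions of the roots gives `‖Pᵢ‖ ≤ 2 ^ (dᵢ - 1) M(Pᵢ)`, and Landau's
inequality gives `M(P) ≤ √(d + 1) ‖P‖`, so `∏ ‖Pᵢ‖ ≤ 2 ^ (d - 1) √(d + 1) ‖P‖ ≤ e ^ d ‖P‖`.
The exponent `d - 1` rather than `d` is needed for `d = 1`, where `2 √2 > e`.
-/

/-- The norm of a complex polynomial: the maximum of the absolute values of its coefficients. -/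
noncomputable def cnorm (P : Polynomial ℂ) : ℝ :=
  (Finset.range (P.natDegree + 1)).sup' Finset.nonempty_range_add_one fun i =>
    ‖P.coeff i‖

open Polynomial Finset

theorem Nat.choose_le_two_pow_pred (n k : ℕ) : n.choose k ≤ 2 ^ (n - 1) := by
  rcases n with _ | n
  · exact Nat.choose_le_two_pow 0 k
  rcases k with _ | k
  · simpa using Nat.one_le_two_pow
  rw [Nat.choose_succ_succ', Nat.add_sub_cancel]
  rcases lt_or_ge k n with hk | hk
  · rw [← Nat.sum_range_choose n]
    exact add_le_sum (fun _ _ => Nat.zero_le _) (mem_range.2 (by omega)) (mem_range.2 (by omega))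
      (by omega)
  · rw [Nat.choose_eq_zero_of_lt (by omega : n < k + 1), add_zero]
    exact Nat.choose_le_two_pow n k

theorem Finset.sum_tsub_one_le {ι : Type*} (s : Finset ι) (f : ι → ℕ) :
    ∑ i ∈ s, (f i - 1) ≤ (∑ i ∈ s, f i) - 1 := by
  induction s using Finset.cons_induction with
  | empty => simp
  | cons a s ha ih => rw [sum_cons, sum_cons]; omega

lemma add_two_mul_four_pow_le_seven_pow (d : ℕ) : (d + 2) * 4 ^ d ≤ 7 ^ (d + 1) := by
  induction d with
  | zero => norm_num
  | succ d ih => rw [pow_succ, pow_succ 7]; nlinarith [pow_pos (by norm_num : 0 < 4) d]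

lemma two_pow_pred_mul_sqrt_le_exp (d : ℕ) : 2 ^ (d - 1) * √(d + 1) ≤ Real.exp d := by
  rcases d with _ | d
  · simp
  have h7 : (7 : ℝ) ≤ Real.exp 2 := by
    rw [show (2 : ℝ) = 1 + 1 by norm_num, Real.exp_add]
    nlinarith [Real.exp_one_gt_d9]
  rw [← pow_le_pow_iff_left₀ (by positivity) (by positivity) two_ne_zero]
  calc (2 ^ (d + 1 - 1) * √((d + 1 : ℕ) + 1)) ^ 2 = (((d + 2) * 4 ^ d : ℕ) : ℝ) := by
        rw [Nat.add_sub_cancel, mul_pow, Real.sq_sqrt (by positivity), ← pow_mul, mul_comm d,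
          pow_mul]
        push_cast; ring
    _ ≤ (7 ^ (d + 1) : ℕ) := by exact_mod_cast add_two_mul_four_pow_le_seven_pow d
    _ ≤ Real.exp 2 ^ (d + 1) := by push_cast; gcongr
    _ = Real.exp (d + 1 : ℕ) ^ 2 := by
        rw [← Real.exp_nat_mul, ← Real.exp_nat_mul]; push_cast; ring_nf

namespace Polynomial

section SupNorm

variable {A : Type*}

lemma norm_coeff_C_mul_X_pow_mul_le [SeminormedRing A] (a : A) (i k : ℕ) (q : A[X]) :
    ‖(C a * X ^ i * q).coeff k‖ ≤ ‖a‖ * q.supNorm := by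
  rw [mul_assoc, coeff_C_mul, coeff_X_pow_mul']
  split_ifs
  · exact (norm_mul_le _ _).trans (by gcongr; exact q.le_supNorm _)
  · simpa using mul_nonneg (norm_nonneg a) q.supNorm_nonneg

lemma supNorm_mul_le [SeminormedRing A] (p q : A[X]) :
    (p * q).supNorm ≤ (p.natDegree + 1) * (p.supNorm * q.supNorm) := by
  obtain ⟨k, hk⟩ := (p * q).exists_eq_supNorm
  conv_rhs at hk => rw [p.as_sum_range_C_mul_X_pow, sum_mul, finsetSum_coeff]
  calc (p * q).supNorm
      ≤ ∑ i ∈ range (p.natDegree + 1), ‖(C (p.coeff i) * X ^ i * q).coeff k‖ :=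
        hk.trans_le (norm_sum_le _ _)
    _ ≤ ∑ i ∈ range (p.natDegree + 1), p.supNorm * q.supNorm :=
        sum_le_sum fun i _ => (norm_coeff_C_mul_X_pow_mul_le _ _ _ _).trans
          (by gcongr; exacts [q.supNorm_nonneg, p.le_supNorm i])
    _ = (p.natDegree + 1) * (p.supNorm * q.supNorm) := by simp

lemma supNorm_prod_le [NormedCommRing A] [NormOneClass A] {ι : Type*} (s : Finset ι)
    (p : ι → A[X]) :
    (∏ i ∈ s, p i).supNorm ≤ (∏ i ∈ s, ((p i).natDegree + 1 : ℝ)) * ∏ i ∈ s, (p i).supNorm := by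
  induction s using Finset.cons_induction with
  | empty => rw [prod_empty, prod_empty, prod_empty, one_mul, ← C_1, supNorm_C, norm_one]
  | cons a s ha ih =>
    rw [prod_cons, prod_cons, prod_cons]
    calc (p a * ∏ i ∈ s, p i).supNorm
        ≤ ((p a).natDegree + 1) * ((p a).supNorm * (∏ i ∈ s, p i).supNorm) := supNorm_mul_le _ _
      _ ≤ ((p a).natDegree + 1) * ((p a).supNorm *
            ((∏ i ∈ s, ((p i).natDegree + 1 : ℝ)) * ∏ i ∈ s, (p i).supNorm)) := by
          gcongr; exact (p a).supNorm_nonneg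
      _ = _ := by ring

lemma supNorm_prod_le_exp_mul_prod_supNorm [NormedCommRing A] [NormOneClass A]
    [NoZeroDivisors A] {ι : Type*} (s : Finset ι) (p : ι → A[X]) (hp : ∀ i ∈ s, p i ≠ 0) :
    (∏ i ∈ s, p i).supNorm ≤ Real.exp (∏ i ∈ s, p i).natDegree * ∏ i ∈ s, (p i).supNorm := by
  have hexp : ∏ i ∈ s, ((p i).natDegree + 1 : ℝ) ≤ Real.exp (∏ i ∈ s, p i).natDegree := by
    rw [natDegree_prod s p hp, Nat.cast_sum, Real.exp_sum]
    exact prod_le_prod (fun _ _ => by positivity) fun i _ => Real.add_one_le_exp _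
  exact (supNorm_prod_le s p).trans
    (by gcongr; exact prod_nonneg fun i _ => (p i).supNorm_nonneg)

end SupNorm

lemma supNorm_le_two_pow_pred_mul_mahlerMeasure (p : ℂ[X]) :
    p.supNorm ≤ 2 ^ (p.natDegree - 1) * p.mahlerMeasure := by
  obtain ⟨k, hk⟩ := p.exists_eq_supNorm
  rw [hk]
  refine (p.norm_coeff_le_choose_mul_mahlerMeasure k).trans ?_
  gcongr
  · exact p.mahlerMeasure_nonneg
  · exact_mod_cast Nat.choose_le_two_pow_pred _ _

lemma mahlerMeasure_prod {ι : Type*} (s : Finset ι) (p : ι → ℂ[X]) :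
    (∏ i ∈ s, p i).mahlerMeasure = ∏ i ∈ s, (p i).mahlerMeasure := by
  induction s using Finset.cons_induction with
  | empty => exact mahlerMeasure_one
  | cons a s ha ih => rw [prod_cons, prod_cons, mahlerMeasure_mul, ih]

lemma prod_supNorm_le_exp_mul_supNorm_prod {ι : Type*} (s : Finset ι) (p : ι → ℂ[X])
    (hp : ∀ i ∈ s, p i ≠ 0) :
    ∏ i ∈ s, (p i).supNorm ≤ Real.exp (∏ i ∈ s, p i).natDegree * (∏ i ∈ s, p i).supNorm := by
  set d := (∏ i ∈ s, p i).natDegree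
  have hpow : ∏ i ∈ s, (2 : ℝ) ^ ((p i).natDegree - 1) ≤ 2 ^ (d - 1) := by
    rw [prod_pow_eq_pow_sum, show d = _ from natDegree_prod s p hp]
    exact pow_le_pow_right₀ one_le_two (sum_tsub_one_le _ _)
  calc ∏ i ∈ s, (p i).supNorm
      ≤ ∏ i ∈ s, (2 ^ ((p i).natDegree - 1) * (p i).mahlerMeasure) :=
        prod_le_prod (fun i _ => (p i).supNorm_nonneg)
          fun i _ => supNorm_le_two_pow_pred_mul_mahlerMeasure _
    _ ≤ 2 ^ (d - 1) * (∏ i ∈ s, p i).mahlerMeasure := by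
        rw [prod_mul_distrib, mahlerMeasure_prod]
        gcongr
        exact prod_nonneg fun i _ => (p i).mahlerMeasure_nonneg
    _ ≤ 2 ^ (d - 1) * (√(d + 1) * (∏ i ∈ s, p i).supNorm) := by
        gcongr; exact mahlerMeasure_le_sqrt_natDegree_add_one_mul_supNorm _
    _ ≤ Real.exp d * (∏ i ∈ s, p i).supNorm := by
        rw [← mul_assoc]
        gcongr
        · exact supNorm_nonneg _
        · exact two_pow_pred_mul_sqrt_le_exp d

end Polynomial

lemma cnorm_eq_supNorm (P : ℂ[X]) : cnorm P = P.supNorm := by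
  refine le_antisymm (sup'_le _ _ fun i _ => P.le_supNorm i) ?_
  obtain ⟨i, hi⟩ := P.exists_eq_supNorm
  rw [hi]
  rcases le_or_gt i P.natDegree with h | h
  · exact le_sup' (fun i => ‖P.coeff i‖) (mem_range.2 (Nat.lt_succ_of_le h))
  · rw [coeff_eq_zero_of_natDegree_lt h, norm_zero]
    exact (norm_nonneg _).trans (le_sup' (fun i => ‖P.coeff i‖) (mem_range.2 P.natDegree.succ_pos))

theorem stmt_0 (s : ℕ) (P : Fin s → Polynomial ℂ) (hP : ∀ i, P i ≠ 0) :
    Real.exp (-((∏ i, P i).natDegree : ℝ)) * cnorm (∏ i, P i) ≤ ∏ i, cnorm (P i) ∧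
    ∏ i, cnorm (P i) ≤ Real.exp ((∏ i, P i).natDegree : ℝ) * cnorm (∏ i, P i) := by
  simp only [cnorm_eq_supNorm]
  constructor
  · rw [Real.exp_neg, inv_mul_le_iff₀ (Real.exp_pos _)]
    exact supNorm_prod_le_exp_mul_prod_supNorm _ P fun i _ => hP i
  · exact prod_supNorm_le_exp_mul_supNorm_prod _ P fun i _ => hP i
end

section
/- Let a be a positive rational number, b a rational number, and let R be an irreducible polynomial of ℚ[T]. Then the polynomial R(aT+b) is also irreducible in ℚ[T]. Moreover, R(aT+b) is an associate of R (i.e., a nonzero rational multiple of R) if and only if either a ≠ 1 and R is a rational multiple of (a−1)T + b, or (a,b) = (1,0). -/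
/-!
An affine substitution `T ↦ aT + b` with `a ≠ 0` is a ring automorphism of `ℚ[T]`, so it preserves
irreducibility. If `R(aT + b) = cR`, then `y ↦ ay + b` maps the finitely many roots of `R` in an
algebraic closure to roots of `R`, so no root has an injective orbit. For `a = 1` this forces
`b = 0`. For `a ≠ 1` the map is `y ↦ t + a(y - t)` around its fixed point `t = b / (1 - a)`, and
since the powers of `a > 0` are pairwise distinct, the only root is `t`. Thus `T - t`, an associate
of `(a - 1)T + b`, divides the irreducible `R`.
-/

open Polynomial Function

theorem Set.Finite.not_injective_iterate {α : Type*} {s : Set α} (hs : s.Finite) {f : α → α}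
    (hf : Set.MapsTo f s s) {x : α} (hx : x ∈ s) : ¬Injective fun k : ℕ => f^[k] x :=
  fun hinj => hs.not_infinite (Set.infinite_of_injective_forall_mem hinj fun k => hf.iterate k hx)

theorem injective_iterate_add_right {A : Type*} [CommRing A] [IsDomain A] [CharZero A] {b : A}
    (hb : b ≠ 0) (x : A) : Injective fun k : ℕ => (· + b)^[k] x := by
  intro i j hij
  simp only [add_right_iterate, nsmul_eq_mul] at hij
  exact Nat.cast_injective (mul_right_cancel₀ hb (add_left_cancel hij))

theorem iterate_mul_add_eq {A : Type*} [CommRing A] {a b t : A} (ht : a * t + b = t) (x : A)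
    (k : ℕ) : (a * · + b)^[k] x = a ^ k * (x - t) + t := by
  induction k with
  | zero => simp
  | succ k ih => rw [iterate_succ_apply', ih]; linear_combination ht

theorem injective_iterate_mul_add {A : Type*} [CommRing A] [IsDomain A] {a b t x : A}
    (ha : Injective (a ^ · : ℕ → A)) (ht : a * t + b = t) (hx : x ≠ t) :
    Injective fun k : ℕ => (a * · + b)^[k] x := by
  intro i j hij
  simp only [iterate_mul_add_eq ht] at hij
  exact ha (mul_right_cancel₀ (sub_ne_zero.mpr hx) (add_right_cancel hij))

namespace Polynomial

variable {K : Type*} [Field K]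

theorem Irreducible.comp_C_mul_X_add_C {R : K[X]} (hR : Irreducible R) {a : K} (ha : a ≠ 0)
    (b : K) : Irreducible (R.comp (C a * X + C b)) := by
  have : Invertible a := invertibleOfNonzero ha
  simpa [algEquivCMulXAddC_apply, ← comp_eq_aeval] using hR.map (algEquivCMulXAddC a b)

theorem Irreducible.exists_smul_eq_of_dvd {p q : K[X]} (hq : Irreducible q) (hp : ¬IsUnit p)
    (hpq : p ∣ q) : ∃ c : K, c ≠ 0 ∧ q = c • p := by
  obtain ⟨r, rfl⟩ := hpq
  obtain ⟨c, hc, rfl⟩ := Polynomial.isUnit_iff.mp ((hq.isUnit_or_isUnit rfl).resolve_left hp)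
  exact ⟨c, hc.ne_zero, by rw [smul_eq_C_mul, mul_comm]⟩

theorem mapsTo_rootSet_of_comp_eq_smul {A : Type*} [CommRing A] [IsDomain A] [Algebra K A]
    {R q : K[X]} {c : K} (h : R.comp q = c • R) :
    Set.MapsTo (fun y : A => aeval y q) (R.rootSet A) (R.rootSet A) := by
  intro y hy
  rw [mem_rootSet] at hy ⊢
  refine ⟨hy.1, ?_⟩
  rw [← aeval_comp, h, map_smul, hy.2, smul_zero]

theorem exists_root_not_injective_iterate_of_comp_eq_smul {R q : K[X]} {c : K}
    (hR : 0 < R.degree) (h : R.comp q = c • R) :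
    ∃ x : AlgebraicClosure K, aeval x R = 0 ∧
      ¬Injective fun k : ℕ => (fun y => aeval y q)^[k] x := by
  obtain ⟨x, hx⟩ := IsAlgClosed.exists_aeval_eq_zero (AlgebraicClosure K) R hR.ne'
  have hxR : x ∈ R.rootSet (AlgebraicClosure K) :=
    (mem_rootSet_of_ne (ne_zero_of_degree_gt hR)).mpr hx
  exact ⟨x, hx, (R.rootSet_finite _).not_injective_iterate (mapsTo_rootSet_of_comp_eq_smul h) hxR⟩

theorem eq_zero_of_comp_X_add_C_eq_smul [CharZero K] {R : K[X]} {b c : K} (hR : 0 < R.degree)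
    (h : R.comp (X + C b) = c • R) : b = 0 := by
  obtain ⟨x, -, hx⟩ := exists_root_not_injective_iterate_of_comp_eq_smul hR h
  by_contra hb
  refine hx ?_
  simpa using injective_iterate_add_right ((_root_.map_ne_zero _).mpr hb) x

theorem C_sub_one_mul_X_add_C_eq_smul {a b t : K} (ht : a * t + b = t) :
    C (a - 1) * X + C b = (a - 1) • (X - C t) := by
  rw [smul_eq_C_mul, show b = -((a - 1) * t) by linear_combination ht, C_neg, C_mul]
  ring

theorem exists_smul_eq_of_comp_eq_smul {R : K[X]} (hR : Irreducible R) {a b c : K}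
    (ha : Injective (a ^ · : ℕ → K)) (h : R.comp (C a * X + C b) = c • R) :
    ∃ c' : K, c' ≠ 0 ∧ R = c' • (C (a - 1) * X + C b) := by
  have ha1 : a - 1 ≠ 0 := sub_ne_zero.mpr fun h1 => by simpa [h1] using ha.ne zero_ne_one
  obtain ⟨t, ht⟩ : ∃ t, a * t + b = t :=
    ⟨b / (1 - a), by field_simp [show 1 - a ≠ 0 by contrapose! ha1; linear_combination -ha1]; ring⟩
  set f := algebraMap K (AlgebraicClosure K)
  obtain ⟨x, hx, hnot⟩ :=
    exists_root_not_injective_iterate_of_comp_eq_smul (degree_pos_of_irreducible hR) h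
  have hxt : x = f t := by
    by_contra hxt
    refine hnot ?_
    have hfa : Injective (f a ^ · : ℕ → AlgebraicClosure K) := by
      simpa [comp_def, ← map_pow] using f.injective.comp ha
    simpa using injective_iterate_mul_add hfa (by rw [← map_mul, ← map_add, ht]) hxt
  have hRt : R.IsRoot t := by
    rw [hxt, aeval_algebraMap_apply, map_eq_zero_iff _ f.injective] at hx
    simpa using hx
  obtain ⟨c', hc', hR'⟩ := hR.exists_smul_eq_of_dvd (not_isUnit_X_sub_C t) (dvd_iff_isRoot.mpr hRt)
  refine ⟨c' / (a - 1), div_ne_zero hc' ha1, ?_⟩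
  rw [hR', C_sub_one_mul_X_add_C_eq_smul ht, smul_smul, div_mul_cancel₀ _ ha1]

theorem comp_C_mul_X_add_C_eq_smul_of_eq_smul {R : K[X]} {a b c : K}
    (hR : R = c • (C (a - 1) * X + C b)) : R.comp (C a * X + C b) = a • R := by
  subst hR
  simp only [smul_eq_C_mul, add_comp, mul_comp, sub_comp, one_comp, C_comp, X_comp, map_sub,
    map_one]
  ring

end Polynomial

theorem stmt_3 (a b : ℚ) (ha : 0 < a) (R : Polynomial ℚ) (hR : Irreducible R) :
    Irreducible (R.comp (Polynomial.C a * Polynomial.X + Polynomial.C b)) ∧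
    ((∃ c : ℚ, c ≠ 0 ∧
        R.comp (Polynomial.C a * Polynomial.X + Polynomial.C b) = c • R) ↔
      ((a ≠ 1 ∧ ∃ c : ℚ, c ≠ 0 ∧
          R = c • (Polynomial.C (a - 1) * Polynomial.X + Polynomial.C b)) ∨
        (a = 1 ∧ b = 0))) := by
  refine ⟨hR.comp_C_mul_X_add_C ha.ne' b, ?_, ?_⟩
  · rintro ⟨c, -, h⟩
    by_cases ha1 : a = 1
    · subst ha1
      exact Or.inr ⟨rfl, eq_zero_of_comp_X_add_C_eq_smul (degree_pos_of_irreducible hR)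
        (by simpa using h)⟩
    · exact Or.inl ⟨ha1, exists_smul_eq_of_comp_eq_smul hR (pow_right_injective₀ ha ha1) h⟩
  · rintro (⟨-, c, -, hRc⟩ | ⟨rfl, rfl⟩)
    · exact ⟨a, ha.ne', comp_C_mul_X_add_C_eq_smul_of_eq_smul hRc⟩
    · exact ⟨1, one_ne_zero, by simp⟩
end

section
/- Let a ∈ ℚ with a > 0, b ∈ ℚ, and let λ_{a,b} denote the automorphism of ℚ[T] mapping P(T) to P(aT+b). Define H(λ_{a,b}) = H(1,a,b), the projective height of the rational point (1,a,b). Then H(λ_{a,b}^{-1}) = H(λ_{a,b}), and H(λλ') ≤ 2 H(λ) H(λ') for any two such automorphisms λ, λ'. -/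
/-- The content of a vector of rationals: the unique positive rational `r` (for a nonzero
vector) such that `r⁻¹ • x` is a primitive integer point. Computed as the gcd of the
numerators after clearing denominators, divided by the common denominator. -/
noncomputable def vcont (x : Fin 3 → ℚ) : ℚ :=
  let d : ℤ := Finset.univ.lcm fun i => ((x i).den : ℤ)
  ((Finset.univ.gcd fun i => (x i * (d : ℚ)).num : ℤ) : ℚ) / (d : ℚ)

/-- The projective height of a point of `ℚ³`: `‖x‖ / cont(x)`. -/
noncomputable def vheight (x : Fin 3 → ℚ) : ℚ :=
  (Finset.univ.sup' Finset.univ_nonempty fun i => |x i|) / vcont x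

/-- `H(λ_{a,b}) := H(1,a,b)`, the height of the automorphism `P(T) ↦ P(aT+b)` of `ℚ[T]`. -/
noncomputable def lamheight (a b : ℚ) : ℚ := vheight ![1, a, b]

/-! Clearing denominators, `(1, a, b)` is a positive rational multiple of an integer triple
`w = (D, A, B)`, and `H(1, a, b) = ‖w‖ / gcd(w)`. The inverse `λ⁻¹` is then represented by
`(A, D, -B)`, which has the same norm and gcd. The product `λλ'` is represented by
`(DD', AA', A'B + DB')`, whose norm is at most `2‖w‖‖w'‖` and whose gcd is a multiple of
`gcd(w) gcd(w')`. -/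

open Finset

lemma Rat.mul_intCast_eq_num_of_den_dvd {x : ℚ} {n : ℤ} (h : (x.den : ℤ) ∣ n) :
    x * n = (x * n).num := by
  obtain ⟨k, rfl⟩ := h
  have hx : x * ((x.den * k : ℤ) : ℚ) = ((x.num * k : ℤ) : ℚ) := by
    push_cast
    rw [← mul_assoc, Rat.mul_den_eq_num]
  rw [hx, Rat.num_intCast]

lemma Finset.int_gcd_nonneg {ι : Type*} (s : Finset ι) (f : ι → ℤ) : 0 ≤ s.gcd f :=
  Int.nonneg_of_normalize_eq_self Finset.normalize_gcd

lemma Finset.int_gcd_pos {ι : Type*} {s : Finset ι} {f : ι → ℤ} {i : ι} (hi : i ∈ s)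
    (hf : f i ≠ 0) : 0 < s.gcd f :=
  (s.int_gcd_nonneg f).lt_of_ne fun h => hf (Finset.gcd_eq_zero_iff.mp h.symm i hi)

lemma vcont_eq_gcd_div {x : Fin 3 → ℚ} {D : ℤ} {w : Fin 3 → ℤ} (hD : 0 < D)
    (hw : ∀ i, D * x i = w i) : vcont x = (univ.gcd w : ℤ) / D := by
  set d : ℤ := univ.lcm fun i => ((x i).den : ℤ) with hd
  have hd0 : d ≠ 0 := by
    rw [hd, Ne, Finset.lcm_eq_zero_iff]
    simp
  have hv : ∀ i, x i * d = (x i * d).num := fun i =>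
    Rat.mul_intCast_eq_num_of_den_dvd (Finset.dvd_lcm (mem_univ i))
  have hDv : ∀ i, D * (x i * d).num = d * w i := fun i => by
    have : (D : ℚ) * (x i * d).num = d * w i := by rw [← hv, ← hw]; ring
    exact_mod_cast this
  have hgcd : D * univ.gcd (fun i => (x i * d).num) = d * univ.gcd w := by
    have hDg := Finset.gcd_mul_left (s := univ) (a := D) (f := fun i => (x i * d).num)
    have hdg := Finset.gcd_mul_left (s := univ) (a := d) (f := w)
    rw [Int.normalize_of_nonneg hD.le] at hDg
    rw [show normalize d = d from Finset.normalize_lcm] at hdg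
    rw [← hDg, ← hdg]
    exact Finset.gcd_congr rfl fun i _ => hDv i
  rw [vcont, ← hd, div_eq_div_iff (by exact_mod_cast hd0) (by positivity)]
  exact_mod_cast (mul_comm _ _).trans (hgcd.trans (mul_comm _ _))

def supAbs (w : Fin 3 → ℤ) : ℤ := univ.sup' univ_nonempty fun i => |w i|

lemma abs_le_supAbs (w : Fin 3 → ℤ) (i : Fin 3) : |w i| ≤ supAbs w :=
  le_sup' (fun i => |w i|) (mem_univ i)

lemma supAbs_nonneg (w : Fin 3 → ℤ) : 0 ≤ supAbs w :=
  (abs_nonneg _).trans (abs_le_supAbs w 0)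

noncomputable def intHeight (w : Fin 3 → ℤ) : ℚ := (supAbs w : ℚ) / (univ.gcd w : ℤ)

lemma vheight_eq_intHeight {x : Fin 3 → ℚ} {D : ℤ} {w : Fin 3 → ℤ} (hD : 0 < D)
    (hw : ∀ i, D * x i = w i) : vheight x = intHeight w := by
  have hsup : ((supAbs w : ℤ) : ℚ) = D * univ.sup' univ_nonempty fun i => |x i| := by
    rw [supAbs, apply_sup'_eq_sup'_comp univ_nonempty _ fun a b => Int.cast_max,
      mul₀_sup' (by positivity)]
    simp only [Function.comp_apply, Int.cast_abs, ← hw, abs_mul, abs_of_pos (Int.cast_pos.mpr hD)]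
  rw [vheight, vcont_eq_gcd_div hD hw, intHeight, hsup]
  field_simp

lemma lamheight_eq_intHeight {a b : ℚ} {D A B : ℤ} (hD : 0 < D) (ha : D * a = A)
    (hb : D * b = B) : lamheight a b = intHeight ![D, A, B] :=
  vheight_eq_intHeight hD fun i => by fin_cases i <;> simp [ha, hb]

lemma exists_int_mul_eq_intCast (a b : ℚ) :
    ∃ D : ℤ, 0 < D ∧ ∃ A B : ℤ, D * a = A ∧ D * b = B := by
  refine ⟨a.den * b.den, by positivity, a.num * b.den, b.num * a.den, ?_, ?_⟩
  · push_cast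
    linear_combination (b.den : ℚ) * Rat.mul_den_eq_num a
  · push_cast
    linear_combination (a.den : ℚ) * Rat.mul_den_eq_num b

lemma intHeight_swap_neg (x y z : ℤ) : intHeight ![y, x, -z] = intHeight ![x, y, z] := by
  have hsup : supAbs ![y, x, -z] = supAbs ![x, y, z] := by
    simp only [supAbs, Fin.univ_succ]
    simp [sup_left_comm]
  have hgcd : univ.gcd ![y, x, -z] = univ.gcd ![x, y, z] := by
    simp only [Fin.univ_succ]
    simp [← gcd_assoc, gcd_comm y x, ← Int.abs_eq_normalize]
  rw [intHeight, intHeight, hsup, hgcd]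

section Composition

/- An integer triple `(x, y, z)` with `x ≠ 0` stands for the affine map `T ↦ (y T + z) / x`,
i.e. for the matrix `[[y, z], [0, x]]`; the triple `![x * x', y * y', y' * z + x * z']` is the
matrix product `[[y', z'], [0, x']] * [[y, z], [0, x]]`. -/
variable (x y z x' y' z' : ℤ)

lemma gcd_mul_gcd_dvd_gcd_comp :
    univ.gcd ![x, y, z] * univ.gcd ![x', y', z'] ∣ univ.gcd ![x * x', y * y', y' * z + x * z'] := by
  have hg : ∀ i, univ.gcd ![x, y, z] ∣ ![x, y, z] i := fun i => gcd_dvd (mem_univ i)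
  have hg' : ∀ i, univ.gcd ![x', y', z'] ∣ ![x', y', z'] i := fun i => gcd_dvd (mem_univ i)
  refine Finset.dvd_gcd fun i _ => ?_
  fin_cases i
  · exact mul_dvd_mul (hg 0) (hg' 0)
  · exact mul_dvd_mul (hg 1) (hg' 1)
  · exact dvd_add (mul_comm z y' ▸ mul_dvd_mul (hg 2) (hg' 1)) (mul_dvd_mul (hg 0) (hg' 2))

lemma supAbs_comp_le :
    supAbs ![x * x', y * y', y' * z + x * z'] ≤ 2 * supAbs ![x, y, z] * supAbs ![x', y', z'] := by
  set N := supAbs ![x, y, z]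
  set N' := supAbs ![x', y', z']
  have hx : |x| ≤ N := abs_le_supAbs ![x, y, z] 0
  have hy : |y| ≤ N := abs_le_supAbs ![x, y, z] 1
  have hz : |z| ≤ N := abs_le_supAbs ![x, y, z] 2
  have hx' : |x'| ≤ N' := abs_le_supAbs ![x', y', z'] 0
  have hy' : |y'| ≤ N' := abs_le_supAbs ![x', y', z'] 1
  have hz' : |z'| ≤ N' := abs_le_supAbs ![x', y', z'] 2
  have hNN' : 0 ≤ N * N' := mul_nonneg (supAbs_nonneg _) (supAbs_nonneg _)
  have hprod {u v : ℤ} (hu : |u| ≤ N) (hv : |v| ≤ N') : |u * v| ≤ N * N' :=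
    abs_mul u v ▸ mul_le_mul hu hv (abs_nonneg v) (supAbs_nonneg _)
  refine sup'_le _ _ fun i _ => ?_
  fin_cases i
  · show |x * x'| ≤ _
    linarith [hprod hx hx']
  · show |y * y'| ≤ _
    linarith [hprod hy hy']
  · show |y' * z + x * z'| ≤ _
    rw [mul_comm y' z]
    linarith [abs_add_le (z * y') (x * z'), hprod hz hy', hprod hx hz']

lemma intHeight_comp_le (hx : x ≠ 0) (hx' : x' ≠ 0) :
    intHeight ![x * x', y * y', y' * z + x * z'] ≤
      2 * intHeight ![x, y, z] * intHeight ![x', y', z'] := by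
  have hg := Finset.int_gcd_pos (f := ![x, y, z]) (mem_univ 0) hx
  have hg' := Finset.int_gcd_pos (f := ![x', y', z']) (mem_univ 0) hx'
  have hgg := Int.le_of_dvd
    (Finset.int_gcd_pos (f := ![x * x', y * y', y' * z + x * z']) (mem_univ 0)
      (mul_ne_zero hx hx'))
    (gcd_mul_gcd_dvd_gcd_comp x y z x' y' z')
  have h2NN' : 0 ≤ 2 * supAbs ![x, y, z] * supAbs ![x', y', z'] :=
    mul_nonneg (mul_nonneg zero_le_two (supAbs_nonneg _)) (supAbs_nonneg _)
  calc intHeight ![x * x', y * y', y' * z + x * z']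
      ≤ (2 * supAbs ![x, y, z] * supAbs ![x', y', z'] : ℤ) /
          (univ.gcd ![x, y, z] * univ.gcd ![x', y', z'] : ℤ) := by
        unfold intHeight
        gcongr
        exact_mod_cast supAbs_comp_le x y z x' y' z'
      _ = 2 * intHeight ![x, y, z] * intHeight ![x', y', z'] := by
        unfold intHeight
        push_cast
        ring

end Composition

lemma lamheight_inv {a : ℚ} (b : ℚ) (ha : 0 < a) : lamheight (1 / a) (-b / a) = lamheight a b := by
  obtain ⟨D, hD, A, B, hA, hB⟩ := exists_int_mul_eq_intCast a b
  have hApos : 0 < A := by exact_mod_cast hA ▸ mul_pos (Int.cast_pos.mpr hD) ha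
  have hA_inv : A * (1 / a) = D := by rw [← hA]; field_simp
  have hB_inv : A * (-b / a) = ((-B : ℤ) : ℚ) := by push_cast; rw [← hA, ← hB]; field_simp
  rw [lamheight_eq_intHeight hD hA hB, lamheight_eq_intHeight hApos hA_inv hB_inv,
    intHeight_swap_neg]

lemma lamheight_mul_le (a b a' b' : ℚ) :
    lamheight (a * a') (a' * b + b') ≤ 2 * lamheight a b * lamheight a' b' := by
  obtain ⟨D, hD, A, B, hA, hB⟩ := exists_int_mul_eq_intCast a b
  obtain ⟨D', hD', A', B', hA', hB'⟩ := exists_int_mul_eq_intCast a' b'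
  have hA'' : ((D * D' : ℤ) : ℚ) * (a * a') = ((A * A' : ℤ) : ℚ) := by
    push_cast; rw [← hA, ← hA']; ring
  have hB'' : ((D * D' : ℤ) : ℚ) * (a' * b + b') = ((A' * B + D * B' : ℤ) : ℚ) := by
    push_cast; rw [← hA', ← hB, ← hB']; ring
  rw [lamheight_eq_intHeight hD hA hB, lamheight_eq_intHeight hD' hA' hB',
    lamheight_eq_intHeight (mul_pos hD hD') hA'' hB'']
  exact intHeight_comp_le D A B D' A' B' hD.ne' hD'.ne'

theorem stmt_4_general (a b a' b' : ℚ) (ha : 0 < a) :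
    lamheight (1 / a) (-b / a) = lamheight a b ∧
    lamheight (a * a') (a' * b + b') ≤ 2 * lamheight a b * lamheight a' b' :=
  ⟨lamheight_inv b ha, lamheight_mul_le a b a' b'⟩

theorem stmt_4 (a b a' b' : ℚ) (ha : 0 < a) (ha' : 0 < a') :
    lamheight (1 / a) (-b / a) = lamheight a b ∧
    lamheight (a * a') (a' * b + b') ≤ 2 * lamheight a b * lamheight a' b' :=
  stmt_4_general a b a' b' ha
end

section
/- Let a ∈ ℚ with a > 0, b ∈ ℚ, let λ = λ_{a,b} be the automorphism of ℚ[T] sending P(T) to P(aT+b), let P be a nonzero polynomial of ℚ[T], and let n ≥ deg(P). Then deg(λP) = deg(P), and (3H(λ))^{-n} ≤ H(λP)/H(P) ≤ (3H(λ))^{n}, and H(λ)^{-n} ≤ cont(λP)/cont(P) ≤ H(λ)^{n}. -/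
/-- Norm of a rational polynomial: maximum absolute value of its coefficients. -/
noncomputable def qnorm (P : Polynomial ℚ) : ℚ :=
  (Finset.range (P.natDegree + 1)).sup' Finset.nonempty_range_add_one fun i => |P.coeff i|

/-- Content of a rational polynomial: the unique positive rational `r` (for `P ≠ 0`) such
that `P / r` is a primitive integer polynomial. -/
noncomputable def qcont (P : Polynomial ℚ) : ℚ :=
  let d : ℤ := (Finset.range (P.natDegree + 1)).lcm fun i => ((P.coeff i).den : ℤ)
  (((Finset.range (P.natDegree + 1)).gcd fun i => (P.coeff i * (d : ℚ)).num : ℤ) : ℚ) / (d : ℚ)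

/-- Height of a rational polynomial: `H(P) = ‖P‖ / cont(P)`. -/
noncomputable def qheight (P : Polynomial ℚ) : ℚ := qnorm P / qcont P

/-!
Write `(1, a, b) = u⁻¹ (u, v, w)` with `(u, v, w)` a primitive integer vector and `u > 0`, so that
`H(λ) = max (u, |v|, |w|)`.

Content: if `P = cont(P) P₀` with `P₀ ∈ ℤ[T]` of degree `≤ n`, then
`uⁿ P₀(aT + b) = ∑ pᵢ uⁿ⁻ⁱ (vT + w)ⁱ ∈ ℤ[T]`, so `cont(P) ≤ uⁿ cont(λP)`. The inverse substitution
`λ⁻¹ = (uT - w) / v` is of the same kind and gives `cont(λP) ≤ vⁿ cont(P)`.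

Norm: the `ℓ¹` norm of coefficients is submultiplicative, whence `‖P(A)‖ ≤ (1 + ‖A‖₁)ⁿ ‖P‖`. For
`λ` and `λ⁻¹` this gives `‖λP‖ ≤ (1 + a + |b|)ⁿ ‖P‖` and `aⁿ ‖P‖ ≤ (1 + a + |b|)ⁿ ‖λP‖`.

Multiplying the two kinds of estimates, the height ratio is bounded in both directions by
`(u (1 + a + |b|))ⁿ = (u + v + |w|)ⁿ ≤ (3 H(λ))ⁿ`.
-/

open Polynomial

def commonDen {ι : Type*} (s : Finset ι) (f : ι → ℚ) : ℤ := s.lcm fun i => ((f i).den : ℤ)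

noncomputable def ratContent {ι : Type*} (s : Finset ι) (f : ι → ℚ) : ℚ :=
  ((s.gcd fun i => (f i * commonDen s f).num : ℤ) : ℚ) / commonDen s f

lemma vcont_eq_ratContent (x : Fin 3 → ℚ) : vcont x = ratContent Finset.univ x := rfl

section ratContent

variable {ι : Type*} {s : Finset ι} {f : ι → ℚ}

lemma commonDen_pos : 0 < commonDen s f := by
  refine lt_of_le_of_ne ?_ (Ne.symm ?_)
  · exact Int.nonneg_of_normalize_eq_self Finset.normalize_lcm
  · rw [Ne, commonDen, Finset.lcm_eq_zero_iff]
    rintro ⟨i, -, hi⟩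
    exact (f i).den_nz (by exact_mod_cast hi)

lemma num_mul_commonDen {i : ι} (hi : i ∈ s) :
    ((f i * commonDen s f).num : ℚ) = f i * commonDen s f := by
  obtain ⟨k, hk⟩ := Finset.dvd_lcm (f := fun i => ((f i).den : ℤ)) hi
  rw [commonDen, hk, Int.cast_mul, ← mul_assoc, Int.cast_natCast, Rat.mul_den_eq_num,
    ← Int.cast_mul, Rat.num_intCast]

lemma ratContent_nonneg : 0 ≤ ratContent s f :=
  div_nonneg (Int.cast_nonneg (Int.nonneg_of_normalize_eq_self Finset.normalize_gcd))
    (Int.cast_nonneg commonDen_pos.le)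

lemma exists_eq_ratContent_mul {i : ι} (hi : i ∈ s) : ∃ z : ℤ, f i = ratContent s f * z := by
  obtain ⟨z, hz⟩ := Finset.gcd_dvd (f := fun i => (f i * commonDen s f).num) hi
  refine ⟨z, ?_⟩
  have hd : (commonDen s f : ℚ) ≠ 0 := by exact_mod_cast commonDen_pos.ne'
  have h := num_mul_commonDen (f := f) hi
  rw [hz, Int.cast_mul] at h
  rw [ratContent, div_mul_eq_mul_div, eq_div_iff hd, ← h]

lemma ratContent_pos {i : ι} (hi : i ∈ s) (hfi : f i ≠ 0) : 0 < ratContent s f := by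
  obtain ⟨z, hz⟩ := exists_eq_ratContent_mul (f := f) hi
  exact lt_of_le_of_ne ratContent_nonneg fun h => hfi (by rw [hz, ← h, zero_mul])

lemma exists_ratContent_eq_mul {r : ℚ} (h : ∀ i ∈ s, ∃ z : ℤ, f i = r * z) :
    ∃ m : ℤ, ratContent s f = r * m := by
  have hD : (commonDen s f : ℚ) ≠ 0 := by exact_mod_cast commonDen_pos.ne'
  have hdvd : r.num * commonDen s f ∣ r.den * s.gcd fun i => (f i * commonDen s f).num := by
    rw [← Int.normalize_of_nonneg (Int.natCast_nonneg r.den), ← Finset.gcd_mul_left]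
    refine Finset.dvd_gcd fun i hi => ?_
    obtain ⟨z, hz⟩ := h i hi
    refine ⟨z, ?_⟩
    have hnum : ((f i * commonDen s f).num : ℚ) = r * z * commonDen s f := by
      rw [num_mul_commonDen hi, hz]
    rw [← Int.cast_inj (α := ℚ)]
    push_cast
    rw [hnum, ← Rat.mul_den_eq_num]
    ring
  obtain ⟨m, hm⟩ := hdvd
  refine ⟨m, ?_⟩
  have hm' : (r.den : ℚ) * (s.gcd fun i => (f i * commonDen s f).num : ℤ) =
      r * r.den * commonDen s f * m := by
    rw [Rat.mul_den_eq_num]; exact_mod_cast hm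
  rw [ratContent, div_eq_iff hD]
  have hden : (r.den : ℚ) ≠ 0 := by positivity
  apply mul_left_cancel₀ hden
  rw [hm']
  ring

lemma le_ratContent {r : ℚ} (hr : 0 < r) (h : ∀ i ∈ s, ∃ z : ℤ, f i = r * z) {i : ι}
    (hi : i ∈ s) (hfi : f i ≠ 0) : r ≤ ratContent s f := by
  obtain ⟨m, hm⟩ := exists_ratContent_eq_mul h
  have hm1 : (1 : ℚ) ≤ m := by
    have : (0 : ℚ) < m := pos_of_mul_pos_right (hm ▸ ratContent_pos hi hfi) hr.le
    exact_mod_cast (show (0 : ℤ) < m by exact_mod_cast this)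
  rw [hm]
  exact le_mul_of_one_le_right hr.le hm1

end ratContent

namespace Polynomial

lemma C_pow_mul_comp_mem_lifts {R S : Type*} [CommSemiring R] [CommSemiring S] {f : R →+* S}
    {p A : S[X]} {n : ℕ} (hp : p ∈ lifts f) (hn : p.natDegree ≤ n) {r : R}
    (hA : C (f r) * A ∈ lifts f) : C (f r) ^ n * p.comp A ∈ lifts f := by
  have hterm : ∀ i ∈ Finset.range (n + 1), C (f r) ^ n * (C (p.coeff i) * A ^ i) =
      C (p.coeff i) * C (f r) ^ (n - i) * (C (f r) * A) ^ i := by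
    intro i hi
    rw [← Nat.sub_add_cancel (Nat.lt_succ_iff.mp (Finset.mem_range.mp hi)), pow_add,
      Nat.add_sub_cancel, mul_pow]
    ring
  rw [comp, eval₂_eq_sum_range' C (Nat.lt_succ_of_le hn), Finset.mul_sum,
    Finset.sum_congr rfl hterm]
  refine Subsemiring.sum_mem _ fun i _ => mul_mem (mul_mem ?_ (pow_mem (C_mem_lifts f r) _))
    (pow_mem hA i)
  exact C'_mem_lifts ((lifts_iff_coeff_lifts p).mp hp i)

end Polynomial

lemma exists_coeff_eq_qcont_mul (P : ℚ[X]) (i : ℕ) : ∃ z : ℤ, P.coeff i = qcont P * z := by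
  by_cases hi : i ≤ P.natDegree
  · exact exists_eq_ratContent_mul (Finset.mem_range_succ_iff.mpr hi)
  · exact ⟨0, by rw [coeff_eq_zero_of_natDegree_lt (not_le.mp hi), Int.cast_zero, mul_zero]⟩

lemma qcont_pos {P : ℚ[X]} (hP : P ≠ 0) : 0 < qcont P :=
  ratContent_pos (Finset.self_mem_range_succ _) (leadingCoeff_ne_zero.mpr hP)

lemma C_inv_qcont_mul_mem_lifts (P : ℚ[X]) :
    C (qcont P)⁻¹ * P ∈ lifts (Int.castRingHom ℚ) := by
  refine (lifts_iff_coeff_lifts _).mpr fun i => ?_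
  obtain ⟨z, hz⟩ := exists_coeff_eq_qcont_mul P i
  rcases eq_or_ne (qcont P) 0 with h | h
  · exact ⟨0, by simp [h]⟩
  · exact ⟨z, by simp [hz, h]⟩

lemma le_qcont {P : ℚ[X]} (hP : P ≠ 0) {r : ℚ} (hr : 0 < r)
    (h : C r⁻¹ * P ∈ lifts (Int.castRingHom ℚ)) : r ≤ qcont P := by
  refine le_ratContent hr (fun i _ => ?_) (Finset.self_mem_range_succ _)
    (leadingCoeff_ne_zero.mpr hP)
  obtain ⟨z, hz⟩ := (lifts_iff_coeff_lifts _).mp h i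
  refine ⟨z, ?_⟩
  rw [coeff_C_mul, eq_intCast] at hz
  rw [hz, mul_inv_cancel_left₀ hr.ne']

lemma qcont_le_pow_mul_qcont_comp {P A : ℚ[X]} (hPA : P.comp A ≠ 0) {n : ℕ}
    (hn : P.natDegree ≤ n) {u : ℤ} (hu : 0 < u) (hA : C (u : ℚ) * A ∈ lifts (Int.castRingHom ℚ)) :
    qcont P ≤ u ^ n * qcont (P.comp A) := by
  have hP : P ≠ 0 := by rintro rfl; exact hPA zero_comp
  have hlifts := C_pow_mul_comp_mem_lifts (C_inv_qcont_mul_mem_lifts P)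
    ((natDegree_C_mul_le _ _).trans hn) hA
  rw [mul_comp, C_comp, ← mul_assoc, ← C_pow, ← C_mul, eq_intCast, ← div_eq_mul_inv,
    ← inv_div] at hlifts
  rw [← div_le_iff₀' (by positivity)]
  exact le_qcont hPA (div_pos (qcont_pos hP) (by positivity)) hlifts

namespace Polynomial

variable {R : Type*} [CommRing R] [LinearOrder R]

def l1Norm (p : R[X]) : R := ∑ i ∈ Finset.range (p.natDegree + 1), |p.coeff i|

@[simp]
lemma l1Norm_C (c : R) : l1Norm (C c) = |c| := by
  simp [l1Norm]

variable [IsStrictOrderedRing R]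

lemma l1Norm_eq_sum_range {p : R[X]} {n : ℕ} (hn : p.natDegree < n) :
    l1Norm p = ∑ i ∈ Finset.range n, |p.coeff i| := by
  refine Finset.sum_subset (Finset.range_subset_range.mpr hn) fun i _ hi => ?_
  rw [coeff_eq_zero_of_natDegree_lt (by simpa using hi), abs_zero]

lemma l1Norm_nonneg (p : R[X]) : 0 ≤ l1Norm p :=
  Finset.sum_nonneg fun _ _ => abs_nonneg _

@[simp]
lemma l1Norm_one : l1Norm (1 : R[X]) = 1 := by
  rw [← C_1, l1Norm_C, abs_one]

lemma l1Norm_add_le (p q : R[X]) : l1Norm (p + q) ≤ l1Norm p + l1Norm q := by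
  rw [l1Norm_eq_sum_range (Nat.lt_succ_of_le (natDegree_add_le p q)),
    l1Norm_eq_sum_range (Nat.lt_succ_of_le (le_max_left p.natDegree q.natDegree)),
    l1Norm_eq_sum_range (Nat.lt_succ_of_le (le_max_right p.natDegree q.natDegree)),
    ← Finset.sum_add_distrib]
  exact Finset.sum_le_sum fun i _ => (coeff_add p q i).symm ▸ abs_add_le _ _

lemma l1Norm_sum_le {ι : Type*} (s : Finset ι) (p : ι → R[X]) :
    l1Norm (∑ i ∈ s, p i) ≤ ∑ i ∈ s, l1Norm (p i) :=
  Finset.le_sum_of_subadditive l1Norm (by simp [l1Norm]) l1Norm_add_le s p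

lemma l1Norm_C_mul (c : R) (p : R[X]) : l1Norm (C c * p) = |c| * l1Norm p := by
  rw [l1Norm_eq_sum_range (Nat.lt_succ_of_le (natDegree_C_mul_le c p)), l1Norm, Finset.mul_sum]
  simp only [coeff_C_mul, abs_mul]

lemma l1Norm_X_mul (p : R[X]) : l1Norm (X * p) = l1Norm p := by
  have hdeg : (X * p).natDegree < p.natDegree + 2 :=
    Nat.lt_succ_of_le (natDegree_mul_le.trans (by rw [natDegree_X, add_comm]))
  rw [l1Norm_eq_sum_range hdeg, Finset.sum_range_succ', l1Norm]
  simp [coeff_X_mul]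

lemma l1Norm_X_pow_mul (k : ℕ) (p : R[X]) : l1Norm (X ^ k * p) = l1Norm p := by
  induction k with
  | zero => rw [pow_zero, one_mul]
  | succ k ih => rw [pow_succ', mul_assoc, l1Norm_X_mul, ih]

lemma l1Norm_mul_le (p q : R[X]) : l1Norm (p * q) ≤ l1Norm p * l1Norm q := by
  conv_lhs => rw [p.as_sum_range_C_mul_X_pow, Finset.sum_mul]
  calc l1Norm (∑ i ∈ Finset.range (p.natDegree + 1), C (p.coeff i) * X ^ i * q)
      ≤ ∑ i ∈ Finset.range (p.natDegree + 1), l1Norm (C (p.coeff i) * X ^ i * q) :=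
        l1Norm_sum_le _ _
    _ = l1Norm p * l1Norm q := by
        simp only [mul_assoc, l1Norm_C_mul, l1Norm_X_pow_mul]
        exact (Finset.sum_mul _ _ _).symm

lemma l1Norm_pow_le (p : R[X]) (k : ℕ) : l1Norm (p ^ k) ≤ l1Norm p ^ k := by
  induction k with
  | zero => simp
  | succ k ih =>
    rw [pow_succ, pow_succ]
    exact (l1Norm_mul_le _ _).trans (mul_le_mul_of_nonneg_right ih (l1Norm_nonneg p))

lemma l1Norm_C_mul_X_add_C_le (a b : R) : l1Norm (C a * X + C b) ≤ |a| + |b| := by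
  calc l1Norm (C a * X + C b) ≤ l1Norm (C a * X) + l1Norm (C b) := l1Norm_add_le _ _
    _ = |a| + |b| := by rw [← mul_one X, ← pow_one X, l1Norm_C_mul, l1Norm_X_pow_mul]; simp

end Polynomial

lemma sum_range_pow_le_one_add_pow {R : Type*} [CommSemiring R] [PartialOrder R]
    [IsOrderedRing R] {t : R} (ht : 0 ≤ t) (n : ℕ) :
    ∑ i ∈ Finset.range (n + 1), t ^ i ≤ (1 + t) ^ n := by
  rw [add_comm 1 t, add_pow]
  refine Finset.sum_le_sum fun i hi => ?_
  rw [one_pow, mul_one]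
  have hchoose : ((1 : ℕ) : R) ≤ (n.choose i : R) :=
    Nat.mono_cast (Nat.choose_pos (Nat.lt_succ_iff.mp (Finset.mem_range.mp hi)))
  exact le_mul_of_one_le_right (pow_nonneg ht i) (Nat.cast_one (R := R) ▸ hchoose)

lemma qnorm_nonneg (P : ℚ[X]) : 0 ≤ qnorm P :=
  (abs_nonneg (P.coeff 0)).trans
    (Finset.le_sup' (fun i => |P.coeff i|) (Finset.mem_range_succ_iff.mpr P.natDegree.zero_le))

lemma abs_coeff_le_qnorm (P : ℚ[X]) (i : ℕ) : |P.coeff i| ≤ qnorm P := by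
  by_cases hi : i ≤ P.natDegree
  · exact Finset.le_sup' (fun i => |P.coeff i|) (Finset.mem_range_succ_iff.mpr hi)
  · rw [coeff_eq_zero_of_natDegree_lt (not_le.mp hi), abs_zero]
    exact qnorm_nonneg P

lemma qnorm_pos {P : ℚ[X]} (hP : P ≠ 0) : 0 < qnorm P :=
  (abs_pos.mpr (leadingCoeff_ne_zero.mpr hP)).trans_le (abs_coeff_le_qnorm P _)

lemma qnorm_le_l1Norm (P : ℚ[X]) : qnorm P ≤ l1Norm P :=
  Finset.sup'_le _ _ fun _ hi =>
    Finset.single_le_sum (f := fun i => |P.coeff i|) (fun _ _ => abs_nonneg _) hi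

lemma qnorm_comp_le (P A : ℚ[X]) {n : ℕ} (hn : P.natDegree ≤ n) :
    qnorm (P.comp A) ≤ (1 + l1Norm A) ^ n * qnorm P := by
  calc qnorm (P.comp A) ≤ l1Norm (P.comp A) := qnorm_le_l1Norm _
    _ = l1Norm (∑ i ∈ Finset.range (n + 1), C (P.coeff i) * A ^ i) := by
        rw [comp, eval₂_eq_sum_range' C (Nat.lt_succ_of_le hn)]
    _ ≤ ∑ i ∈ Finset.range (n + 1), l1Norm (C (P.coeff i) * A ^ i) := l1Norm_sum_le _ _
    _ ≤ ∑ i ∈ Finset.range (n + 1), qnorm P * l1Norm A ^ i := by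
        refine Finset.sum_le_sum fun i _ => ?_
        rw [l1Norm_C_mul]
        exact mul_le_mul (abs_coeff_le_qnorm P i) (l1Norm_pow_le A i) (l1Norm_nonneg _)
          (qnorm_nonneg P)
    _ ≤ qnorm P * (1 + l1Norm A) ^ n := by
        rw [← Finset.mul_sum]
        exact mul_le_mul_of_nonneg_left (sum_range_pow_le_one_add_pow (l1Norm_nonneg A) n)
          (qnorm_nonneg P)
    _ = (1 + l1Norm A) ^ n * qnorm P := mul_comm _ _

lemma Polynomial.comp_C_mul_X_add_C_comp_inv {K : Type*} [Field K] {a : K} (ha : a ≠ 0) (b : K)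
    (p : K[X]) : (p.comp (C a * X + C b)).comp (C a⁻¹ * X + C (-(a⁻¹ * b))) = p := by
  rw [comp_assoc, add_comp, mul_comp, C_comp, C_comp, X_comp, mul_add, ← mul_assoc, ← C_mul,
    ← C_mul, mul_inv_cancel₀ ha, mul_neg, ← mul_assoc, mul_inv_cancel₀ ha, C_1, one_mul,
    one_mul, add_assoc, ← C_add, neg_add_cancel, C_0, add_zero, comp_X]

lemma Polynomial.natDegree_comp_C_mul_X_add_C {R : Type*} [Semiring R] [NoZeroDivisors R] {a : R}
    (ha : a ≠ 0) (b : R) (p : R[X]) : (p.comp (C a * X + C b)).natDegree = p.natDegree := by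
  rw [natDegree_comp, natDegree_linear ha, mul_one]

lemma Polynomial.comp_C_mul_X_add_C_ne_zero {K : Type*} [Field K] {a : K} (ha : a ≠ 0) (b : K)
    {p : K[X]} (hp : p ≠ 0) : p.comp (C a * X + C b) ≠ 0 := fun h =>
  hp (by rw [← comp_C_mul_X_add_C_comp_inv ha b p, h, zero_comp])

lemma qheight_pos {P : ℚ[X]} (hP : P ≠ 0) : 0 < qheight P :=
  div_pos (qnorm_pos hP) (qcont_pos hP)

section AffineSubstitution

variable {a b : ℚ} {u v w : ℤ} {P : ℚ[X]} {n : ℕ}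

lemma qcont_le_pow_mul_qcont_comp_C_mul_X_add_C (ha : a ≠ 0) (hP : P ≠ 0)
    (hn : P.natDegree ≤ n) (hu : 0 < u) (hv : (u : ℚ) * a = v) (hw : (u : ℚ) * b = w) :
    qcont P ≤ u ^ n * qcont (P.comp (C a * X + C b)) := by
  refine qcont_le_pow_mul_qcont_comp (comp_C_mul_X_add_C_ne_zero ha b hP) hn hu ?_
  rw [mul_add, ← mul_assoc, ← C_mul, ← C_mul, hv, hw]
  exact add_mem (mul_mem (C_mem_lifts _ v) (X_mem_lifts _)) (C_mem_lifts _ w)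

lemma qcont_comp_C_mul_X_add_C_le (ha : 0 < a) (hP : P ≠ 0) (hn : P.natDegree ≤ n)
    (hu : 0 < u) (hv : (u : ℚ) * a = v) (hw : (u : ℚ) * b = w) :
    qcont (P.comp (C a * X + C b)) ≤ v ^ n * qcont P := by
  have hv0 : 0 < v := by
    have : (0 : ℚ) < v := hv ▸ mul_pos (Int.cast_pos.mpr hu) ha
    exact_mod_cast this
  have hA : C (v : ℚ) * (C a⁻¹ * X + C (-(a⁻¹ * b))) = C (u : ℚ) * X + C ((-w : ℤ) : ℚ) := by
    rw [mul_add, ← mul_assoc, ← C_mul, ← C_mul, ← hv, Int.cast_neg, ← hw,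
      mul_inv_cancel_right₀ ha.ne', mul_neg, mul_assoc, mul_inv_cancel_left₀ ha.ne']
  have h := qcont_le_pow_mul_qcont_comp (P := P.comp (C a * X + C b))
    (A := C a⁻¹ * X + C (-(a⁻¹ * b))) (n := n) (by rwa [comp_C_mul_X_add_C_comp_inv ha.ne'])
    (by rwa [natDegree_comp_C_mul_X_add_C ha.ne']) hv0
    (by rw [hA]; exact add_mem (mul_mem (C_mem_lifts _ u) (X_mem_lifts _)) (C_mem_lifts _ (-w)))
  rwa [comp_C_mul_X_add_C_comp_inv ha.ne'] at h

lemma qnorm_comp_C_mul_X_add_C_le (hn : P.natDegree ≤ n) :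
    qnorm (P.comp (C a * X + C b)) ≤ (1 + |a| + |b|) ^ n * qnorm P := by
  have h : 1 + l1Norm (C a * X + C b) ≤ 1 + |a| + |b| := by
    linarith [l1Norm_C_mul_X_add_C_le a b]
  exact (qnorm_comp_le P _ hn).trans (mul_le_mul_of_nonneg_right
    (pow_le_pow_left₀ (add_nonneg zero_le_one (l1Norm_nonneg _)) h n) (qnorm_nonneg P))

lemma pow_mul_qnorm_le_qnorm_comp_C_mul_X_add_C (ha : 0 < a) (hn : P.natDegree ≤ n) :
    a ^ n * qnorm P ≤ (1 + |a| + |b|) ^ n * qnorm (P.comp (C a * X + C b)) := by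
  set A := C a⁻¹ * X + C (-(a⁻¹ * b))
  have h := qnorm_comp_le (P.comp (C a * X + C b)) A (n := n)
    (by rwa [natDegree_comp_C_mul_X_add_C ha.ne'])
  rw [comp_C_mul_X_add_C_comp_inv ha.ne'] at h
  have hA : a * (1 + l1Norm A) ≤ 1 + |a| + |b| :=
    calc a * (1 + l1Norm A) ≤ a * (1 + (|a⁻¹| + |-(a⁻¹ * b)|)) := by
          gcongr; exact l1Norm_C_mul_X_add_C_le _ _
      _ = 1 + |a| + |b| := by
          rw [abs_neg, abs_mul, abs_inv, abs_of_pos ha]; field_simp; ring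
  calc a ^ n * qnorm P ≤ a ^ n * ((1 + l1Norm A) ^ n * qnorm (P.comp (C a * X + C b))) :=
        mul_le_mul_of_nonneg_left h (pow_nonneg ha.le n)
    _ = (a * (1 + l1Norm A)) ^ n * qnorm (P.comp (C a * X + C b)) := by rw [mul_pow]; ring
    _ ≤ (1 + |a| + |b|) ^ n * qnorm (P.comp (C a * X + C b)) :=
        mul_le_mul_of_nonneg_right
          (pow_le_pow_left₀ (mul_nonneg ha.le (add_nonneg zero_le_one (l1Norm_nonneg _))) hA n)
          (qnorm_nonneg _)

lemma qheight_comp_C_mul_X_add_C_div_le (ha : a ≠ 0) (hP : P ≠ 0) (hn : P.natDegree ≤ n)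
    (hu : 0 < u) (hv : (u : ℚ) * a = v) (hw : (u : ℚ) * b = w) :
    qheight (P.comp (C a * X + C b)) / qheight P ≤ (u * (1 + |a| + |b|)) ^ n := by
  have hQ := comp_C_mul_X_add_C_ne_zero ha b hP
  rw [qheight, qheight, div_div_div_eq, div_le_iff₀ (mul_pos (qcont_pos hQ) (qnorm_pos hP))]
  calc qnorm (P.comp (C a * X + C b)) * qcont P
      ≤ ((1 + |a| + |b|) ^ n * qnorm P) * (u ^ n * qcont (P.comp (C a * X + C b))) :=
        mul_le_mul (qnorm_comp_C_mul_X_add_C_le hn)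
          (qcont_le_pow_mul_qcont_comp_C_mul_X_add_C ha hP hn hu hv hw) (qcont_pos hP).le
          (mul_nonneg (by positivity) (qnorm_nonneg P))
    _ = _ := by rw [mul_pow]; ring

lemma qheight_div_qheight_comp_C_mul_X_add_C_le (ha : 0 < a) (hP : P ≠ 0)
    (hn : P.natDegree ≤ n) (hu : 0 < u) (hv : (u : ℚ) * a = v) (hw : (u : ℚ) * b = w) :
    qheight P / qheight (P.comp (C a * X + C b)) ≤ (u * (1 + |a| + |b|)) ^ n := by
  have hQ := comp_C_mul_X_add_C_ne_zero ha.ne' b hP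
  rw [qheight, qheight, div_div_div_eq, div_le_iff₀ (mul_pos (qcont_pos hP) (qnorm_pos hQ))]
  have h := mul_le_mul (pow_mul_qnorm_le_qnorm_comp_C_mul_X_add_C (b := b) ha hn)
    (qcont_comp_C_mul_X_add_C_le ha hP hn hu hv hw) (qcont_pos hQ).le
    (mul_nonneg (by positivity) (qnorm_nonneg _))
  rw [← hv] at h
  refine le_of_mul_le_mul_left ?_ (pow_pos ha n)
  calc _ = a ^ n * qnorm P * qcont (P.comp (C a * X + C b)) := by ring
    _ ≤ _ := h
    _ = _ := by rw [mul_pow, mul_pow]; ring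

end AffineSubstitution

lemma exists_int_mul_abs_le_lamheight (a b : ℚ) :
    ∃ u : ℤ, 0 < u ∧ ∀ i, (∃ z : ℤ, (u : ℚ) * ![1, a, b] i = z) ∧
      |(u : ℚ) * ![1, a, b] i| ≤ lamheight a b := by
  set c := ratContent Finset.univ ![1, a, b]
  have hc : 0 < c := ratContent_pos (Finset.mem_univ 0) (by simp)
  have hdiv := fun i => exists_eq_ratContent_mul (f := ![1, a, b]) (Finset.mem_univ i)
  obtain ⟨u, hu⟩ := hdiv 0
  have hcu : (u : ℚ) = c⁻¹ := eq_inv_of_mul_eq_one_right (by simpa using hu.symm)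
  have hu0 : (0 : ℚ) < u := hcu ▸ inv_pos.mpr hc
  refine ⟨u, by exact_mod_cast hu0, fun i => ⟨?_, ?_⟩⟩
  · obtain ⟨z, hz⟩ := hdiv i
    exact ⟨z, by rw [hz, hcu, inv_mul_cancel_left₀ hc.ne']⟩
  · rw [abs_mul, hcu, abs_inv, abs_of_pos hc, inv_mul_eq_div, lamheight, vheight,
      vcont_eq_ratContent]
    exact div_le_div_of_nonneg_right (Finset.le_sup' (fun i => |![1, a, b] i|)
      (Finset.mem_univ i)) hc.le

theorem stmt_5 (a b : ℚ) (ha : 0 < a) (P : Polynomial ℚ) (hP : P ≠ 0)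
    (n : ℕ) (hn : P.natDegree ≤ n) :
    (P.comp (Polynomial.C a * Polynomial.X + Polynomial.C b)).natDegree = P.natDegree ∧
    (3 * lamheight a b) ^ (-(n : ℤ)) ≤
      qheight (P.comp (Polynomial.C a * Polynomial.X + Polynomial.C b)) / qheight P ∧
    qheight (P.comp (Polynomial.C a * Polynomial.X + Polynomial.C b)) / qheight P ≤
      (3 * lamheight a b) ^ (n : ℤ) ∧
    (lamheight a b) ^ (-(n : ℤ)) ≤
      qcont (P.comp (Polynomial.C a * Polynomial.X + Polynomial.C b)) / qcont P ∧
    qcont (P.comp (Polynomial.C a * Polynomial.X + Polynomial.C b)) / qcont P ≤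
      (lamheight a b) ^ (n : ℤ) := by
  obtain ⟨u, hu, hH⟩ := exists_int_mul_abs_le_lamheight a b
  obtain ⟨-, hu_le⟩ := hH 0
  obtain ⟨⟨v, hv⟩, hv_le⟩ := hH 1
  obtain ⟨⟨w, hw⟩, hw_le⟩ := hH 2
  have hu0 : (0 : ℚ) < u := Int.cast_pos.mpr hu
  simp only [Matrix.cons_val_zero, Matrix.cons_val_one, Matrix.cons_val_two, Matrix.head_cons,
    Matrix.tail_cons, mul_one, abs_mul, abs_of_pos hu0] at hu_le hv hv_le hw hw_le
  have hH0 : 0 < lamheight a b := hu0.trans_le hu_le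
  have h3 : (u : ℚ) * (1 + |a| + |b|) ≤ 3 * lamheight a b := by linarith
  have hQ := comp_C_mul_X_add_C_ne_zero ha.ne' b hP
  refine ⟨natDegree_comp_C_mul_X_add_C ha.ne' b P, ?_, ?_, ?_, ?_⟩
  · rw [zpow_neg, zpow_natCast, inv_le_comm₀ (by positivity)
      (div_pos (qheight_pos hQ) (qheight_pos hP)), inv_div]
    exact (qheight_div_qheight_comp_C_mul_X_add_C_le ha hP hn hu hv hw).trans
      (pow_le_pow_left₀ (by positivity) h3 n)
  · rw [zpow_natCast]
    exact (qheight_comp_C_mul_X_add_C_div_le ha.ne' hP hn hu hv hw).trans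
      (pow_le_pow_left₀ (by positivity) h3 n)
  · rw [zpow_neg, zpow_natCast, inv_le_comm₀ (by positivity)
      (div_pos (qcont_pos hQ) (qcont_pos hP)), inv_div, div_le_iff₀ (qcont_pos hQ)]
    exact (qcont_le_pow_mul_qcont_comp_C_mul_X_add_C ha.ne' hP hn hu hv hw).trans
      (mul_le_mul_of_nonneg_right (pow_le_pow_left₀ hu0.le hu_le n) (qcont_pos hQ).le)
  · rw [zpow_natCast, div_le_iff₀ (qcont_pos hP)]
    rw [abs_of_pos ha, hv] at hv_le
    exact (qcont_comp_C_mul_X_add_C_le ha hP hn hu hv hw).trans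
      (mul_le_mul_of_nonneg_right (pow_le_pow_left₀ (hv ▸ by positivity) hv_le n)
        (qcont_pos hP).le)
end

section
/- Let s ≥ 1 be an integer, and let E and F be finite subsets of ℤ^s such that O(E) ⊆ F, where O(E) = ∪_{i=1}^s (E + e_i). Suppose |F| ≤ s²/4. Then |F| ≥ (s/2)|E|. -/
/-!
The basis vectors `e_i` form a Sidon set `B`, so in the additive energy `E[E, B]` a quadruple
`a₁ + b₁ = a₂ + b₂` with `a₁ ≠ a₂` is determined by `(a₁, a₂)`, whence
`E[E, B] ≤ |E| (|E| - 1) + |E| s`. As `O(E) = E + B ⊆ F`, Cauchy–Schwarz in the form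
`|E|² |B|² ≤ |E + B| E[E, B]` gives `|E| s² ≤ |F| (|E| + s)`. For `|E| ≤ s` this is
`|F| ≥ s |E| / 2`; for `|E| ≥ s` it gives `|F| ≥ s² / 2`, which with `|F| ≤ s² / 4` forces `s = 0`.
-/

open Finset Function
open scoped Pointwise Combinatorics.Additive

def IsSidon {α : Type*} [Add α] (t : Set α) : Prop :=
  ∀ a ∈ t, ∀ b ∈ t, ∀ c ∈ t, ∀ d ∈ t, a + b = c + d → a = c ∧ b = d ∨ a = d ∧ b = c

section AddEnergy

variable {α : Type*} [AddCancelCommMonoid α] {t : Set α}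

lemma IsSidon.eq_and_eq_of_add_eq_add (ht : IsSidon t) {a₁ a₂ b₁ b₂ b₃ b₄ : α}
    (hb₁ : b₁ ∈ t) (hb₂ : b₂ ∈ t) (hb₃ : b₃ ∈ t) (hb₄ : b₄ ∈ t) (ha : a₁ ≠ a₂)
    (h₁ : a₁ + b₁ = a₂ + b₂) (h₂ : a₁ + b₃ = a₂ + b₄) : b₁ = b₃ ∧ b₂ = b₄ := by
  have hb : b₁ + b₄ = b₂ + b₃ := by
    refine add_left_cancel (a := a₁ + a₂) ?_
    calc a₁ + a₂ + (b₁ + b₄) = (a₁ + b₁) + (a₂ + b₄) := by abel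
      _ = (a₂ + b₂) + (a₁ + b₃) := by rw [h₁, h₂]
      _ = a₁ + a₂ + (b₂ + b₃) := by abel
  rcases ht _ hb₁ _ hb₄ _ hb₂ _ hb₃ hb with ⟨rfl, -⟩ | ⟨h₁₃, h₄₂⟩
  · exact absurd (add_right_cancel h₁) ha
  · exact ⟨h₁₃, h₄₂.symm⟩

variable [DecidableEq α]

lemma addEnergy_le_of_isSidon (s : Finset α) {t : Finset α} (ht : IsSidon (t : Set α)) :
    E[s, t] ≤ #s * (#s - 1) + #s * #t := by
  rw [addEnergy, ← card_filter_add_card_filter_not (fun x => x.1.1 = x.1.2), filter_filter,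
    filter_filter, add_comm]
  refine add_le_add ?_ ?_
  · rw [Nat.mul_sub_one, ← offDiag_card]
    refine card_le_card_of_injOn Prod.fst (fun x hx => ?_) fun x hx y hy hxy => ?_
    · simp only [coe_filter, mem_product, Set.mem_ofPred_eq] at hx
      simpa using ⟨hx.1.1.1, hx.1.1.2, hx.2.2⟩
    · simp only [coe_filter, mem_product, Set.mem_ofPred_eq] at hx hy
      obtain ⟨⟨⟨ha₁, ha₂⟩, hb₁, hb₂⟩, hx, hne⟩ := hx
      obtain ⟨⟨-, hb₃, hb₄⟩, hy, -⟩ := hy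
      rw [← hxy] at hy
      obtain ⟨h₁₃, h₂₄⟩ := ht.eq_and_eq_of_add_eq_add hb₁ hb₂ hb₃ hb₄ hne hx hy
      exact Prod.ext hxy (Prod.ext h₁₃ h₂₄)
  · rw [← card_product]
    refine card_le_card_of_injOn (fun x => (x.1.1, x.2.1)) (fun x hx => ?_) ?_
    · simp only [coe_filter, mem_product, Set.mem_ofPred_eq] at hx
      simpa using ⟨hx.1.1.1, hx.1.2.1⟩
    · rintro ⟨⟨a₁, a₂⟩, b₁, b₂⟩ hx ⟨⟨a₃, a₄⟩, b₃, b₄⟩ hy hxy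
      simp only [coe_filter, mem_product, Set.mem_ofPred_eq] at hx hy
      obtain ⟨-, hx, rfl⟩ := hx
      obtain ⟨-, hy, rfl⟩ := hy
      obtain ⟨rfl, rfl⟩ := Prod.mk.inj hxy
      rw [add_left_cancel hx.symm, add_left_cancel hy.symm]

end AddEnergy

lemma Pi.single_one_left_injective {ι M : Type*} [DecidableEq ι] [Zero M] [One M]
    [NeZero (1 : M)] :
    Injective fun i : ι => Pi.single i (1 : M) :=
  fun i j h => by simpa [Pi.single_apply] using congrFun h i

lemma isSidon_range_single_one {ι M : Type*} [DecidableEq ι] [AddCommMonoidWithOne M]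
    [IsCancelAdd M] [CharZero M] :
    IsSidon (Set.range fun i : ι => Pi.single i (1 : M)) := by
  rintro _ ⟨a, rfl⟩ _ ⟨b, rfl⟩ _ ⟨c, rfl⟩ _ ⟨d, rfl⟩ h
  have hcd : c = a ∨ d = a := by
    by_contra! hne
    have := congrFun h a
    simp only [Pi.add_apply, Pi.single_apply, if_neg hne.1.symm, if_neg hne.2.symm,
      add_zero] at this
    split_ifs at this <;> norm_num at this
  rcases hcd with rfl | rfl
  · exact Or.inl ⟨rfl, add_left_cancel h⟩
  · rw [add_comm (Pi.single c 1)] at h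
    exact Or.inr ⟨rfl, add_left_cancel h⟩

lemma half_mul_le_of_sq_mul_sq_le {m s N : ℝ} (hm : 0 ≤ m) (hN : 0 ≤ N)
    (hNs : N ≤ s ^ 2 / 4) (h : m ^ 2 * s ^ 2 ≤ N * (m * (m + s))) : s / 2 * m ≤ N := by
  rcases le_total m s with hms | hsm
  · have : (m * s) ^ 2 ≤ 2 * N * (m * s) := by nlinarith
    nlinarith
  · have : m ^ 2 * s ^ 2 ≤ 2 * N * m ^ 2 := by
      nlinarith [mul_le_mul_of_nonneg_left (show m * (m + s) ≤ 2 * m ^ 2 by nlinarith) hN]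
    nlinarith

theorem stmt_7_general (s : ℕ) (E F : Finset (Fin s → ℤ))
    (hO : ∀ x ∈ E, ∀ i : Fin s, x + Pi.single i 1 ∈ F)
    (hF : (F.card : ℝ) ≤ (s : ℝ) ^ 2 / 4) :
    ((s : ℝ) / 2) * E.card ≤ (F.card : ℝ) := by
  set B : Finset (Fin s → ℤ) := univ.image fun i => Pi.single i 1
  have hB : #B = s := by
    rw [card_image_of_injective _ Pi.single_one_left_injective, card_univ, Fintype.card_fin]
  have hBSidon : IsSidon (B : Set (Fin s → ℤ)) := by
    simpa [B] using isSidon_range_single_one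
  have hEB : E + B ⊆ F := add_subset_iff.2 fun x hx _ hy => by
    obtain ⟨i, -, rfl⟩ := mem_image.1 hy
    exact hO x hx i
  have hEnergy : E[E, B] ≤ #E * (#E + s) := by
    grw [addEnergy_le_of_isSidon E hBSidon, hB, Nat.sub_le, mul_add]
  have key : #E ^ 2 * s ^ 2 ≤ #F * (#E * (#E + s)) :=
    calc #E ^ 2 * s ^ 2 = #E ^ 2 * #B ^ 2 := by rw [hB]
      _ ≤ #(E + B) * E[E, B] := le_card_add_mul_addEnergy E B
      _ ≤ #F * (#E * (#E + s)) := Nat.mul_le_mul (card_le_card hEB) hEnergy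
  exact half_mul_le_of_sq_mul_sq_le (by positivity) (by positivity) hF (by exact_mod_cast key)

theorem stmt_7 (s : ℕ) (hs : 1 ≤ s) (E F : Finset (Fin s → ℤ))
    (hO : ∀ x ∈ E, ∀ i : Fin s, x + Pi.single i 1 ∈ F)
    (hF : (F.card : ℝ) ≤ (s : ℝ) ^ 2 / 4) :
    ((s : ℝ) / 2) * E.card ≤ (F.card : ℝ) :=
  stmt_7_general s E F hO hF
end

section
/- Let s, k be integers with s ≥ 1 and k ≥ 0. Let U = {x ∈ ℤ^s : x_1 + ⋯ + x_s = 0}, let C_k = {x ∈ U : ‖x‖₁ ≤ 2k}, let C be a subset of C_k, and let D = O(C) = ∪_{i=1}^s (C + e_i). If C is finite, then |D| ≥ ((s−k)/(k+1)) |C|. -/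
/-!
Double count the pairs `(x, y) ∈ C × D` with `y = x + e_i` for some `i` such that `x_i ≥ 0`.
A point `x ∈ C_k` has coordinate sum `0` and `‖x‖₁ ≤ 2k`, so at most `k` of its coordinates are
negative and it lies in at least `s - k` pairs. A point `y = x + e_j ∈ D` has coordinate sum `1` and
`‖y‖₁ ≤ 2k + 1`, so at most `k + 1` of its coordinates are positive, and each pair `(x, y)` is
determined by such a coordinate `i` (as `x = y - e_i`, with `y_i = x_i + 1 > 0`).
-/

open Finset

section CoordinateCounts

variable {ι : Type*} [Fintype ι]

theorem two_mul_card_neg_le_sum_abs_sub_sum (x : ι → ℤ) :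
    2 * (#{i | x i < 0} : ℤ) ≤ ∑ i, |x i| - ∑ i, x i := by
  rw [← sum_sub_distrib, card_filter, Nat.cast_sum, mul_sum]
  refine sum_le_sum fun i _ => ?_
  split_ifs with hi
  · rw [abs_of_neg hi]; omega
  · rw [abs_of_nonneg (not_lt.mp hi)]; simp

theorem two_mul_card_pos_le_sum_abs_add_sum (x : ι → ℤ) :
    2 * (#{i | 0 < x i} : ℤ) ≤ ∑ i, |x i| + ∑ i, x i := by
  simpa [neg_neg, sum_neg_distrib] using two_mul_card_neg_le_sum_abs_sub_sum (-x)

variable (k : ℕ) {x : ι → ℤ} (hx0 : ∑ i, x i = 0) (hx1 : ∑ i, |x i| ≤ 2 * (k : ℤ))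
include hx0 hx1

theorem card_sub_le_card_nonneg : Fintype.card ι - k ≤ #{i | 0 ≤ x i} := by
  have hneg : 2 * (#{i | x i < 0} : ℤ) ≤ 2 * k := by
    linarith [two_mul_card_neg_le_sum_abs_sub_sum x]
  have hsplit := card_filter_add_card_filter_not (s := univ) (fun i => 0 ≤ x i)
  simp only [not_le, card_univ] at hsplit
  omega

theorem card_pos_add_single_le [DecidableEq ι] (j : ι) :
    #{i | 0 < (x + Pi.single j 1 : ι → ℤ) i} ≤ k + 1 := by
  set y := x + Pi.single j 1
  have hy0 : ∑ i, y i = 1 := by simp [y, sum_add_distrib, hx0]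
  have hy1 : ∑ i, |y i| ≤ 2 * k + 1 :=
    calc ∑ i, |y i| ≤ ∑ i, (|x i| + |(Pi.single j 1 : ι → ℤ) i|) :=
          sum_le_sum fun i _ => abs_add_le _ _
      _ ≤ 2 * k + 1 := by
          rw [sum_add_distrib]
          simp [Pi.single_apply, apply_ite abs, hx1]
  have := two_mul_card_pos_le_sum_abs_add_sum y
  omega

end CoordinateCounts

section UnitSteps

variable {ι : Type*} [Fintype ι] [DecidableEq ι]

def IsUnitStepUp (x y : ι → ℤ) : Prop := ∃ i, 0 ≤ x i ∧ y = x + Pi.single i 1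

omit [Fintype ι] in
theorem add_single_one_injective (x : ι → ℤ) :
    Function.Injective fun i => x + Pi.single i (1 : ℤ) := by
  intro i j hij
  by_contra hne
  simpa [Pi.single_apply, hne] using congrFun hij i

open Classical in
theorem card_nonneg_le_card_bipartiteAbove (D : Finset (ι → ℤ)) (x : ι → ℤ)
    (hD : ∀ i, 0 ≤ x i → x + Pi.single i 1 ∈ D) :
    #{i | 0 ≤ x i} ≤ #(D.bipartiteAbove IsUnitStepUp x) := by
  refine card_le_card_of_injOn (fun i => x + Pi.single i 1) (fun i hi => ?_)
    (add_single_one_injective x).injOn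
  have hi : 0 ≤ x i := by simpa using hi
  exact (mem_bipartiteAbove IsUnitStepUp).mpr ⟨hD i hi, i, hi, rfl⟩

open Classical in
theorem card_bipartiteBelow_le_card_pos (C : Finset (ι → ℤ)) (y : ι → ℤ) :
    #(C.bipartiteBelow IsUnitStepUp y) ≤ #{i | 0 < y i} := by
  refine (card_le_card fun x hx => ?_).trans
    (card_image_le (f := fun i => y - Pi.single i 1))
  obtain ⟨-, i, hxi, rfl⟩ := (mem_bipartiteBelow IsUnitStepUp).mp hx
  have hyi : 0 < (x + Pi.single i 1 : ι → ℤ) i := by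
    simp only [Pi.add_apply, Pi.single_eq_same]
    omega
  exact mem_image.mpr ⟨i, by simpa using hyi, by simp⟩

end UnitSteps

theorem stmt_8_general (s k : ℕ) (C : Finset (Fin s → ℤ))
    (hC : ∀ x ∈ C, (∑ i, x i) = 0 ∧ (∑ i, |x i|) ≤ 2 * (k : ℤ)) :
    ((s : ℝ) - k) / ((k : ℝ) + 1) * C.card ≤
      ((Finset.univ.biUnion fun i : Fin s =>
        C.image fun x => x + Pi.single i 1).card : ℝ) := by
  classical
  set D := Finset.univ.biUnion fun i : Fin s => C.image fun x => x + Pi.single i 1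
  have hcount : #C * (s - k) ≤ #D * (k + 1) := by
    refine card_mul_le_card_mul IsUnitStepUp (fun x hx => ?_) (fun y hy => ?_)
    · obtain ⟨hx0, hx1⟩ := hC x hx
      have hnonneg := card_sub_le_card_nonneg k hx0 hx1
      rw [Fintype.card_fin] at hnonneg
      refine hnonneg.trans (card_nonneg_le_card_bipartiteAbove D x fun i _ => ?_)
      exact mem_biUnion.mpr ⟨i, mem_univ i, mem_image_of_mem _ hx⟩
    · obtain ⟨j, -, x, hx, rfl⟩ : ∃ j ∈ univ, ∃ x ∈ C, x + Pi.single j 1 = y := by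
        simpa only [D, mem_biUnion, mem_image] using hy
      obtain ⟨hx0, hx1⟩ := hC x hx
      exact (card_bipartiteBelow_le_card_pos C _).trans (card_pos_add_single_le k hx0 hx1 j)
  have hs : (s : ℝ) ≤ ((s - k : ℕ) : ℝ) + k := by exact_mod_cast le_tsub_add
  have hcount' : (#C : ℝ) * ((s - k : ℕ) : ℝ) ≤ #D * (k + 1) := by exact_mod_cast hcount
  rw [div_mul_eq_mul_div, div_le_iff₀ (by positivity)]
  nlinarith [(#C).cast_nonneg (α := ℝ)]

theorem stmt_8 (s k : ℕ) (hs : 1 ≤ s) (C : Finset (Fin s → ℤ))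
    (hC : ∀ x ∈ C, (∑ i, x i) = 0 ∧ (∑ i, |x i|) ≤ 2 * (k : ℤ)) :
    ((s : ℝ) - k) / ((k : ℝ) + 1) * C.card ≤
      ((Finset.univ.biUnion fun i : Fin s =>
        C.image fun x => x + Pi.single i 1).card : ℝ) :=
  stmt_8_general s k C hC
end

section
/- Let A and E be finite nonempty sets, let κ₁, κ₂ > 0 be real numbers, and let φ : A × E → [0, κ₁] be a function such that for any pair of distinct elements a₁, a₂ of A, Σ_{ξ ∈ E} min(φ(a₁,ξ), φ(a₂,ξ)) ≤ κ₂. Then Σ_{a ∈ A} Σ_{ξ ∈ E} φ(a,ξ) ≤ κ₁|E| + κ₂·C(|A|,2), where C(|A|,2) = |A|(|A|−1)/2. -/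
open Finset

/-!
Fix a column ξ and let `m` be a row where `φ · ξ` is largest. Every other entry `φ a ξ` equals
`min (φ a ξ) (φ m ξ)`, so the column sum is at most its maximum (at most `κ₁`) plus the sum of
`min (φ a ξ) (φ b ξ)` over all unordered pairs `{a, b}` of distinct rows. Summing over the columns
and exchanging the two sums, each of the `C(|A|, 2)` pairs contributes at most `κ₂`.
-/

theorem Finset.sum_le_sup'_add_sum_inf_offDiag {ι : Type*} [DecidableEq ι] {s : Finset ι}
    (hs : s.Nonempty) {f : ι → ℝ} (hf : ∀ a ∈ s, 0 ≤ f a) :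
    ∑ a ∈ s, f a ≤ s.sup' hs f + ∑ z ∈ s.offDiag.image Sym2.mk.uncurry, (z.map f).inf := by
  obtain ⟨m, hm, hmax⟩ := exists_mem_eq_sup' hs f
  have h_erase : ∑ a ∈ s.erase m, f a =
      ∑ z ∈ (s.erase m).image (fun a ↦ s(a, m)), (z.map f).inf := by
    rw [sum_image fun a _ b _ hab ↦ Sym2.congr_left.mp hab]
    refine sum_congr rfl fun a ha ↦ ?_
    simpa [hmax] using le_sup' f (mem_of_mem_erase ha)
  have h_sub : (s.erase m).image (fun a ↦ s(a, m)) ⊆ s.offDiag.image Sym2.mk.uncurry := by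
    intro z hz
    obtain ⟨a, ha, rfl⟩ := mem_image.mp hz
    exact mem_image.mpr ⟨(a, m), mem_offDiag.mpr
      ⟨mem_of_mem_erase ha, hm, ne_of_mem_erase ha⟩, rfl⟩
  have h_nonneg : ∀ z ∈ s.offDiag.image Sym2.mk.uncurry, 0 ≤ (z.map f).inf := by
    simp only [mem_image, mem_offDiag, Prod.exists]
    rintro _ ⟨a, b, ⟨ha, hb, -⟩, rfl⟩
    exact le_inf (hf a ha) (hf b hb)
  rw [← add_sum_erase s f hm, hmax, h_erase]
  exact add_le_add_right (sum_le_sum_of_subset_of_nonneg h_sub fun z hz _ ↦ h_nonneg z hz) _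

theorem Finset.sum_image_offDiag_le_mul_choose {ι : Type*} [DecidableEq ι] {s : Finset ι}
    {g : Sym2 ι → ℝ} {c : ℝ}
    (hg : ∀ a ∈ s, ∀ b ∈ s, a ≠ b → g s(a, b) ≤ c) :
    ∑ z ∈ s.offDiag.image Sym2.mk.uncurry, g z ≤ c * (#s).choose 2 := by
  rw [← Sym2.card_image_offDiag, mul_comm, ← nsmul_eq_mul]
  refine sum_le_card_nsmul _ _ _ fun z hz ↦ ?_
  simp only [mem_image, mem_offDiag, Prod.exists] at hz
  obtain ⟨a, b, ⟨ha, hb, hab⟩, rfl⟩ := hz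
  exact hg a ha b hb hab

theorem stmt_9_general {α β : Type*} (A : Finset α) (E : Finset β)
    (hA : A.Nonempty)
    (κ₁ κ₂ : ℝ) (φ : α → β → ℝ)
    (hrange : ∀ a ∈ A, ∀ ξ ∈ E, φ a ξ ∈ Set.Icc 0 κ₁)
    (hmin : ∀ a₁ ∈ A, ∀ a₂ ∈ A, a₁ ≠ a₂ →
      ∑ ξ ∈ E, min (φ a₁ ξ) (φ a₂ ξ) ≤ κ₂) :
    ∑ a ∈ A, ∑ ξ ∈ E, φ a ξ ≤ κ₁ * E.card + κ₂ * (A.card.choose 2) := by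
  classical
  have h_cols : ∀ ξ ∈ E, ∑ a ∈ A, φ a ξ ≤ A.sup' hA (φ · ξ) +
      ∑ z ∈ A.offDiag.image Sym2.mk.uncurry, (z.map (φ · ξ)).inf := fun ξ hξ ↦
    sum_le_sup'_add_sum_inf_offDiag hA fun a ha ↦ (hrange a ha ξ hξ).1
  have h_sup : ∑ ξ ∈ E, A.sup' hA (φ · ξ) ≤ κ₁ * #E := by
    rw [mul_comm, ← nsmul_eq_mul]
    exact sum_le_card_nsmul _ _ _ fun ξ hξ ↦ sup'_le hA _ fun a ha ↦ (hrange a ha ξ hξ).2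
  have h_pairs : ∑ z ∈ A.offDiag.image Sym2.mk.uncurry, ∑ ξ ∈ E, (z.map (φ · ξ)).inf ≤
      κ₂ * (#A).choose 2 :=
    sum_image_offDiag_le_mul_choose fun a ha b hb hab ↦ by simpa using hmin a ha b hb hab
  calc ∑ a ∈ A, ∑ ξ ∈ E, φ a ξ = ∑ ξ ∈ E, ∑ a ∈ A, φ a ξ := sum_comm
    _ ≤ ∑ ξ ∈ E, (A.sup' hA (φ · ξ) +
          ∑ z ∈ A.offDiag.image Sym2.mk.uncurry, (z.map (φ · ξ)).inf) := sum_le_sum h_cols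
    _ = ∑ ξ ∈ E, A.sup' hA (φ · ξ) +
          ∑ z ∈ A.offDiag.image Sym2.mk.uncurry, ∑ ξ ∈ E, (z.map (φ · ξ)).inf := by
      rw [sum_add_distrib, sum_comm (s := E)]
    _ ≤ κ₁ * #E + κ₂ * (#A).choose 2 := add_le_add h_sup h_pairs

theorem stmt_9 {α β : Type*} (A : Finset α) (E : Finset β)
    (hA : A.Nonempty) (hE : E.Nonempty)
    (κ₁ κ₂ : ℝ) (hκ₁ : 0 < κ₁) (hκ₂ : 0 < κ₂) (φ : α → β → ℝ)
    (hrange : ∀ a ∈ A, ∀ ξ ∈ E, φ a ξ ∈ Set.Icc 0 κ₁)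
    (hmin : ∀ a₁ ∈ A, ∀ a₂ ∈ A, a₁ ≠ a₂ →
      ∑ ξ ∈ E, min (φ a₁ ξ) (φ a₂ ξ) ≤ κ₂) :
    ∑ a ∈ A, ∑ ξ ∈ E, φ a ξ ≤ κ₁ * E.card + κ₂ * (A.card.choose 2) :=
  stmt_9_general A E hA κ₁ κ₂ φ hrange hmin
end

section
/- Let m, n, m₁, n₁ be integers with 2 ≤ m₁ ≤ m and 2 ≤ n₁ ≤ n. Any m × n matrix with entries in {0,1} that contains no 2 × n₁ submatrix consisting entirely of ones contains at most n + (n₁−1)m(m−1)/2 ones. Equivalently, the Zarankiewicz number satisfies k(2, n₁; m, n) ≤ 1 + n + (n₁−1)m(m−1)/2. -/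
lemma stmt10_aux (d : ℕ) : d ≤ 1 + d.choose 2 := by
  rcases d with _ | _ | d
  · simp
  · simp
  · rw [Nat.choose_succ_succ (d+1) 1, Nat.choose_one_right]
    omega

theorem stmt_10 (m n m₁ n₁ : ℕ) (hm₁ : 2 ≤ m₁) (hm : m₁ ≤ m) (hn₁ : 2 ≤ n₁) (hn : n₁ ≤ n)
    (M : Fin m → Fin n → Bool)
    (hsub : ¬ ∃ (i₁ i₂ : Fin m) (J : Finset (Fin n)), i₁ ≠ i₂ ∧ J.card = n₁ ∧
      ∀ j ∈ J, M i₁ j = true ∧ M i₂ j = true) :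
    (Finset.univ.filter fun p : Fin m × Fin n => M p.1 p.2 = true).card ≤
      n + (n₁ - 1) * Nat.choose m 2 := by
  classical
  set R : Fin n → Finset (Fin m) := fun j => Finset.univ.filter (fun i => M i j = true) with hR
  -- pair bound
  have hpair : ∀ P ∈ (Finset.univ : Finset (Fin m)).powersetCard 2,
      (Finset.univ.filter fun j => P ⊆ R j).card ≤ n₁ - 1 := by
    intro P hP
    rw [Finset.mem_powersetCard] at hP
    obtain ⟨i₁, i₂, hne, rfl⟩ := Finset.card_eq_two.mp hP.2
    by_contra h
    push_neg at h
    have h' : n₁ ≤ (Finset.univ.filter fun j => {i₁, i₂} ⊆ R j).card := by omega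
    obtain ⟨J, hJsub, hJcard⟩ := Finset.exists_subset_card_eq h'
    refine hsub ⟨i₁, i₂, J, hne, hJcard, ?_⟩
    intro j hj
    have := hJsub hj
    rw [Finset.mem_filter] at this
    have h1 : i₁ ∈ R j := this.2 (by simp)
    have h2 : i₂ ∈ R j := this.2 (by simp)
    rw [hR] at h1 h2
    simp only [Finset.mem_filter] at h1 h2
    exact ⟨h1.2, h2.2⟩
  -- double counting: ∑ j, choose 2 of column row-sets ≤ (n₁-1) * choose m 2
  have hdc : ∑ j : Fin n, ((R j).card).choose 2 ≤ (n₁ - 1) * Nat.choose m 2 := by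
    have step1 : ∀ j : Fin n, ((R j).card).choose 2 =
        ∑ P ∈ (Finset.univ : Finset (Fin m)).powersetCard 2, if P ⊆ R j then 1 else 0 := by
      intro j
      rw [← Finset.card_powersetCard, ← Finset.card_filter]
      congr 1
      ext P
      simp only [Finset.mem_powersetCard, Finset.mem_filter, Finset.subset_univ, true_and]
      tauto
    calc ∑ j : Fin n, ((R j).card).choose 2
        = ∑ j : Fin n, ∑ P ∈ (Finset.univ : Finset (Fin m)).powersetCard 2,
            if P ⊆ R j then 1 else 0 := by
          exact Finset.sum_congr rfl fun j _ => step1 j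
      _ = ∑ P ∈ (Finset.univ : Finset (Fin m)).powersetCard 2, ∑ j : Fin n,
            if P ⊆ R j then 1 else 0 := Finset.sum_comm
      _ = ∑ P ∈ (Finset.univ : Finset (Fin m)).powersetCard 2,
            (Finset.univ.filter fun j => P ⊆ R j).card := by
          refine Finset.sum_congr rfl fun P _ => ?_
          rw [Finset.card_filter]
      _ ≤ ∑ P ∈ (Finset.univ : Finset (Fin m)).powersetCard 2, (n₁ - 1) :=
          Finset.sum_le_sum hpair
      _ = (n₁ - 1) * Nat.choose m 2 := by
          rw [Finset.sum_const, smul_eq_mul, Finset.card_powersetCard,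
            Finset.card_univ, Fintype.card_fin, mul_comm]
  -- total count = ∑ j, (R j).card
  have htot : (Finset.univ.filter fun p : Fin m × Fin n => M p.1 p.2 = true).card
      = ∑ j : Fin n, (R j).card := by
    rw [Finset.card_filter, Fintype.sum_prod_type_right]
    refine Finset.sum_congr rfl fun j _ => ?_
    rw [hR, Finset.card_filter]
  rw [htot]
  calc ∑ j : Fin n, (R j).card
      ≤ ∑ j : Fin n, (1 + ((R j).card).choose 2) :=
        Finset.sum_le_sum fun j _ => stmt10_aux _
    _ = n + ∑ j : Fin n, ((R j).card).choose 2 := by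
        rw [Finset.sum_add_distrib, Finset.sum_const, Finset.card_univ, Fintype.card_fin,
          smul_eq_mul, mul_one]
    _ ≤ n + (n₁ - 1) * Nat.choose m 2 := Nat.add_le_add_left hdc n
end

section
/- Let s ≥ 1 be an integer and let F be a nonempty finite subset of ℤ^s. Define E = F ∩ (F−e_1) ∩ ⋯ ∩ (F−e_s), where (e_1,...,e_s) is the canonical basis of ℤ^s. Then |E| ≤ |F| − |F|^{(s−1)/s}. -/
/-!
Write `π_i x` (here `Function.update x i 0`) for the projection forgetting the `i`-th coordinate.
The discrete Loomis–Whitney inequality `|F| ^ (s - 1) ≤ ∏ i, |π_i F|`, proved by induction on the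
coordinates with Hölder's inequality in the fibres, forces some projection to have at least
`|F| ^ ((s - 1) / s)` points. Every line parallel to `e_i` that meets `F` contains a topmost point
`x` of `F`, for which `x + e_i ∉ F`; these points lie outside `E` and have distinct projections,
so `|F| - |E| ≥ |π_i F|`.
-/

open Finset

theorem Finset.exists_le_of_pow_card_le_prod {ι R : Type*} [CommSemiring R] [LinearOrder R]
    [IsStrictOrderedRing R] {s : Finset ι} (hs : s.Nonempty) {f : ι → R}
    (hf : ∀ i ∈ s, 0 < f i) {c : R} (h : c ^ s.card ≤ ∏ i ∈ s, f i) : ∃ i ∈ s, c ≤ f i := by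
  by_contra! hlt
  exact ((prod_lt_prod_of_nonempty hf hlt hs).trans_eq (prod_const c)).not_ge h

theorem Real.sum_prod_rpow_inv_card_le_prod_sum {ι κ : Type*} (T : Finset ι) {A : Finset κ}
    (hA : A.Nonempty) (a : κ → ι → ℝ) (ha : ∀ i ∈ A, ∀ t ∈ T, 0 ≤ a i t) :
    ∑ t ∈ T, ∏ i ∈ A, a i t ^ (A.card : ℝ)⁻¹ ≤
      ∏ i ∈ A, (∑ t ∈ T, a i t) ^ (A.card : ℝ)⁻¹ := by
  set k : ℝ := (A.card : ℝ)
  set S : κ → ℝ := fun i => ∑ t ∈ T, a i t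
  have hk : 0 < k := Nat.cast_pos.2 hA.card_pos
  have hS : ∀ i ∈ A, 0 ≤ S i := fun i hi => sum_nonneg (ha i hi)
  have hnormalize : ∀ i ∈ A, ∀ t ∈ T, a i t = S i * (a i t / S i) := by
    intro i hi t ht
    -- if `S i = 0` then all `a i t` vanish, so the junk value `a i t / 0 = 0` is harmless
    rcases (hS i hi).eq_or_lt with h | h
    · simp [(sum_eq_zero_iff_of_nonneg (ha i hi)).1 h.symm t ht]
    · field_simp
  have hamgm : ∀ t ∈ T, ∏ i ∈ A, (a i t / S i) ^ k⁻¹ ≤ ∑ i ∈ A, k⁻¹ * (a i t / S i) :=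
    fun t ht => Real.geom_mean_le_arith_mean_weighted A _ _ (fun _ _ => by positivity)
      (by simp [k, hk.ne']) (fun i hi => div_nonneg (ha i hi t ht) (hS i hi))
  have hmass : ∑ t ∈ T, ∑ i ∈ A, k⁻¹ * (a i t / S i) ≤ 1 := by
    rw [sum_comm]
    calc ∑ i ∈ A, ∑ t ∈ T, k⁻¹ * (a i t / S i) = ∑ i ∈ A, k⁻¹ * (S i / S i) := by
          simp only [← mul_sum, ← sum_div, S]
      _ ≤ ∑ _i ∈ A, k⁻¹ :=
          sum_le_sum fun i _ => mul_le_of_le_one_right (by positivity) (div_self_le_one _)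
      _ = 1 := by simp [k, hk.ne']
  calc ∑ t ∈ T, ∏ i ∈ A, a i t ^ k⁻¹
      = (∏ i ∈ A, S i ^ k⁻¹) * ∑ t ∈ T, ∏ i ∈ A, (a i t / S i) ^ k⁻¹ := by
        rw [mul_sum]
        refine sum_congr rfl fun t ht => ?_
        rw [← prod_mul_distrib]
        refine prod_congr rfl fun i hi => ?_
        rw [← Real.mul_rpow (hS i hi) (div_nonneg (ha i hi t ht) (hS i hi)),
          ← hnormalize i hi t ht]
    _ ≤ (∏ i ∈ A, S i ^ k⁻¹) * 1 :=
        mul_le_mul_of_nonneg_left ((sum_le_sum hamgm).trans hmass)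
          (prod_nonneg fun i hi => Real.rpow_nonneg (hS i hi) _)
    _ = ∏ i ∈ A, S i ^ k⁻¹ := mul_one _

section LoomisWhitney

variable {ι α : Type*} [DecidableEq ι] [DecidableEq α] [Zero α] [DecidableEq (ι → α)]

theorem Finset.card_filter_apply_eq_le_card_image_update (F : Finset (ι → α)) (i : ι) (t : α) :
    (F.filter fun x => x i = t).card ≤ (F.image fun x => Function.update x i 0).card := by
  refine card_le_card_of_injOn _ (fun x hx => mem_image_of_mem _ (mem_filter.1 hx).1)
    fun x hx y hy hxy => ?_
  have hrestore : ∀ z ∈ F.filter fun x => x i = t,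
      Function.update (Function.update z i 0) i t = z := by
    intro z hz
    rw [Function.update_idem, ← (mem_filter.1 hz).2, Function.update_eq_self]
  rw [← hrestore x hx, ← hrestore y hy]
  exact congrArg (Function.update · i t) hxy

theorem Finset.sum_card_image_update_filter_apply_eq (F : Finset (ι → α)) {i j : ι}
    (hij : i ≠ j) :
    ∑ t ∈ F.image (· j), ((F.filter fun x => x j = t).image fun x => Function.update x i 0).card =
      (F.image fun x => Function.update x i 0).card := by
  rw [card_eq_sum_card_fiberwise (f := (· j)) (t := F.image (· j))]
  · refine sum_congr rfl fun t _ => ?_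
    simp only [filter_image, Function.update_of_ne hij.symm]
  · intro y hy
    obtain ⟨x, hx, rfl⟩ := mem_image.1 hy
    simpa [Function.update_of_ne hij.symm] using mem_image_of_mem _ hx

theorem Finset.card_pow_le_prod_card_image_update (A : Finset ι) (F : Finset (ι → α))
    (hF : F.Nonempty) (hA : ∀ x ∈ F, ∀ y ∈ F, ∀ j ∉ A, x j = y j) :
    (F.card : ℝ) ^ (A.card - 1) ≤
      ∏ i ∈ A, ((F.image fun x => Function.update x i 0).card : ℝ) := by
  induction A using Finset.induction_on generalizing F with
  | empty => simp
  | insert i₀ B hi₀ ih =>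
    set P : ι → ℝ := fun i => ((F.image fun x => Function.update x i 0).card : ℝ)
    rcases B.eq_empty_or_nonempty with rfl | hB
    · simpa [P] using (hF.image fun x => Function.update x i₀ 0).card_pos
    set k := B.card
    have hk : (0 : ℝ) < k := Nat.cast_pos.2 hB.card_pos
    have hP : ∀ i, 0 ≤ P i := fun i => Nat.cast_nonneg _
    set fiber : α → Finset (ι → α) := fun t => F.filter fun x => x i₀ = t
    set Q : ι → α → ℝ := fun i t => ((fiber t).image fun x => Function.update x i 0).card
    have hQ : ∀ i t, 0 ≤ Q i t := fun i t => Nat.cast_nonneg _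
    have hfiber : ∀ t ∈ F.image (· i₀),
        ((fiber t).card : ℝ) ≤ P i₀ ^ (k : ℝ)⁻¹ * ∏ i ∈ B, Q i t ^ (k : ℝ)⁻¹ := by
      intro t ht
      obtain ⟨x, hx, rfl⟩ := mem_image.1 ht
      have hIH := ih (fiber (x i₀)) ⟨x, mem_filter.2 ⟨hx, rfl⟩⟩ fun y hy z hz j hj => by
        rcases eq_or_ne j i₀ with rfl | hji
        · exact (mem_filter.1 hy).2.trans (mem_filter.1 hz).2.symm
        · exact hA y (mem_filter.1 hy).1 z (mem_filter.1 hz).1 j (by simp [hji, hj])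
      have hpow : ((fiber (x i₀)).card : ℝ) ^ k ≤ P i₀ * ∏ i ∈ B, Q i (x i₀) := by
        rw [← Nat.sub_add_cancel (show 1 ≤ k from hB.card_pos), pow_succ']
        exact mul_le_mul (Nat.cast_le.2 (card_filter_apply_eq_le_card_image_update F i₀ _)) hIH
          (by positivity) (hP i₀)
      rw [Real.finsetProd_rpow B _ (fun i _ => hQ i _), ← Real.mul_rpow (hP i₀)
        (prod_nonneg fun i _ => hQ i _), Real.le_rpow_inv_iff_of_pos (Nat.cast_nonneg _)
        (mul_nonneg (hP i₀) (prod_nonneg fun i _ => hQ i _)) hk, Real.rpow_natCast]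
      exact hpow
    have hroot : (F.card : ℝ) ≤ (∏ i ∈ insert i₀ B, P i) ^ (k : ℝ)⁻¹ := by
      calc (F.card : ℝ) = ∑ t ∈ F.image (· i₀), ((fiber t).card : ℝ) := by
            rw [← Nat.cast_sum, ← card_eq_sum_card_fiberwise fun x hx => mem_image_of_mem _ hx]
        _ ≤ ∑ t ∈ F.image (· i₀), P i₀ ^ (k : ℝ)⁻¹ * ∏ i ∈ B, Q i t ^ (k : ℝ)⁻¹ :=
            sum_le_sum hfiber
        _ ≤ P i₀ ^ (k : ℝ)⁻¹ * ∏ i ∈ B, (∑ t ∈ F.image (· i₀), Q i t) ^ (k : ℝ)⁻¹ := by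
            rw [← mul_sum]
            gcongr
            exact Real.sum_prod_rpow_inv_card_le_prod_sum _ hB _ fun i _ t _ => hQ i t
        _ = (∏ i ∈ insert i₀ B, P i) ^ (k : ℝ)⁻¹ := by
            rw [prod_insert hi₀, Real.mul_rpow (hP i₀) (prod_nonneg fun i _ => hP i),
              ← Real.finsetProd_rpow B _ fun i _ => hP i]
            refine congrArg _ (prod_congr rfl fun i hi => congrArg (· ^ (k : ℝ)⁻¹) ?_)
            rw [← Nat.cast_sum]
            exact congrArg Nat.cast
              (sum_card_image_update_filter_apply_eq F (ne_of_mem_of_not_mem hi hi₀))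
    rw [card_insert_of_notMem hi₀, Nat.add_sub_cancel, ← Real.rpow_natCast]
    exact (Real.le_rpow_inv_iff_of_pos (Nat.cast_nonneg _) (prod_nonneg fun i _ => hP i) hk).1
      hroot

end LoomisWhitney

theorem Finset.card_image_update_le_card_filter_add_single_notMem {ι : Type*} [DecidableEq ι]
    [DecidableEq (ι → ℤ)] (F : Finset (ι → ℤ)) (i : ι) :
    (F.image fun x => Function.update x i 0).card ≤
      (F.filter fun x => x + Pi.single i 1 ∉ F).card := by
  refine card_le_card_of_surjOn (fun x => Function.update x i 0) ?_
  intro y hy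
  obtain ⟨x, hx, rfl⟩ := mem_image.1 hy
  obtain ⟨z, hz, hmax⟩ := exists_max_image
    (F.filter fun z => Function.update z i 0 = Function.update x i 0) (· i)
    ⟨x, mem_filter.2 ⟨hx, rfl⟩⟩
  rw [mem_filter] at hz
  refine ⟨z, mem_filter.2 ⟨hz.1, fun hstep => ?_⟩, hz.2⟩
  have hsame : Function.update (z + Pi.single i 1) i 0 = Function.update z i 0 := by
    ext j
    rcases eq_or_ne j i with rfl | hj <;> simp [*]
  have := hmax _ (mem_filter.2 ⟨hstep, hsame.trans hz.2⟩)
  simp at this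

theorem stmt_11 (s : ℕ) (hs : 1 ≤ s) (F : Finset (Fin s → ℤ)) (hF : F.Nonempty) :
    (((F.filter fun x => ∀ i : Fin s, x + Pi.single i 1 ∈ F).card : ℝ)) ≤
      (F.card : ℝ) - (F.card : ℝ) ^ (((s : ℝ) - 1) / (s : ℝ)) := by
  have hLW := card_pow_le_prod_card_image_update univ F hF (by simp)
  have hpow : ((F.card : ℝ) ^ (((s : ℝ) - 1) / s)) ^ (univ : Finset (Fin s)).card =
      (F.card : ℝ) ^ ((univ : Finset (Fin s)).card - 1) := by
    rw [card_univ, Fintype.card_fin, ← Real.rpow_mul_natCast (Nat.cast_nonneg _),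
      div_mul_cancel₀ _ (by positivity), ← Nat.cast_pred hs, Real.rpow_natCast]
  obtain ⟨i, -, hi⟩ := exists_le_of_pow_card_le_prod (univ_nonempty_iff.2 ⟨⟨0, hs⟩⟩)
    (fun i _ => Nat.cast_pos.2 (hF.image fun x => Function.update x i 0).card_pos)
    (hpow.trans_le hLW)
  have hstuck : (F.filter fun x => x + Pi.single i 1 ∉ F) ⊆
      F.filter fun x => ¬ ∀ j : Fin s, x + Pi.single j 1 ∈ F :=
    monotone_filter_right F fun x _ hx hall => hx (hall i)
  have hpartition : (((F.filter fun x => ∀ j : Fin s, x + Pi.single j 1 ∈ F).card : ℕ) : ℝ) +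
      (F.filter fun x => ¬ ∀ j : Fin s, x + Pi.single j 1 ∈ F).card = F.card :=
    mod_cast card_filter_add_card_filter_not _
  have hbound := hi.trans (Nat.cast_le.2
    ((card_image_update_le_card_filter_add_single_notMem F i).trans (card_le_card hstuck)))
  linarith
end

section
/- Let c, n, X be positive reals with e^n ≤ X, let ξ₁, ..., ξ_s be complex numbers, and let R ∈ ℚ[T] be an irreducible polynomial with deg(R) ≤ n, H(R) ≤ X² and ∏_{i=1}^s |R(ξ_i)|/cont(R) < (X^{deg(R)} H(R)^n)^{−c/2}. Then there exists an integer k ≥ 1 such that Q = R^k satisfies deg(Q) ≤ n, H(Q) ≤ X², and ∏_{i=1}^s |Q(ξ_i)|/cont(Q) < X^{−cn/4}. -/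
/-!
Choose `k` as large as possible subject to `k · deg R ≤ n` and `H(R)^k ≤ X`, or `k = 1`
when already `X ≤ H(R)^2`. Then `H(R^k) ≤ (deg R + 1)^k H(R)^k ≤ e^n X ≤ X^2`. Since the
content is multiplicative (Gauss's lemma), the product for `R^k` is the `k`-th power of the
product for `R`, hence below `(X^{deg R} H(R)^n)^{-ck/2}`. Maximality of `k` gives
`n ≤ 2k · deg R` or `X ≤ H(R)^{2k}`, and either way `(X^{deg R} H(R)^n)^k ≥ X^{n/2}`.
-/

open Polynomial

noncomputable def lcmDen (P : ℚ[X]) : ℤ :=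
  (Finset.range (P.natDegree + 1)).lcm fun i => ((P.coeff i).den : ℤ)

lemma lcmDen_pos (P : ℚ[X]) : 0 < lcmDen P := by
  refine lt_of_le_of_ne (Int.nonneg_of_normalize_eq_self Finset.normalize_lcm) (Ne.symm ?_)
  rw [lcmDen, Ne, Finset.lcm_eq_zero_iff]
  rintro ⟨i, -, hi⟩
  exact (P.coeff i).den_ne_zero (by exact_mod_cast hi)

lemma exists_map_eq_C_lcmDen_mul (P : ℚ[X]) :
    ∃ q : ℤ[X], q.map (Int.castRingHom ℚ) = C (lcmDen P : ℚ) * P := by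
  refine (mem_lifts _).1 ((lifts_iff_coeff_lifts _).2 fun i => ?_)
  rw [coeff_C_mul]
  rcases le_or_gt i P.natDegree with hi | hi
  · obtain ⟨e, he⟩ := Finset.dvd_lcm (f := fun i => ((P.coeff i).den : ℤ))
      (Finset.mem_range.2 (Nat.lt_succ_of_le hi))
    refine ⟨(P.coeff i).num * e, ?_⟩
    rw [lcmDen, he, eq_intCast, Int.cast_mul, Int.cast_mul, ← Rat.mul_den_eq_num]
    push_cast
    ring
  · exact ⟨0, by simp [coeff_eq_zero_of_natDegree_lt hi]⟩

lemma qcont_eq_content_div {P : ℚ[X]} {q : ℤ[X]}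
    (hq : q.map (Int.castRingHom ℚ) = C (lcmDen P : ℚ) * P) :
    qcont P = q.content / lcmDen P := by
  have hd : (lcmDen P : ℚ) ≠ 0 := by exact_mod_cast (lcmDen_pos P).ne'
  have hnum : ∀ i, (P.coeff i * lcmDen P).num = q.coeff i := fun i => by
    have := congrArg (coeff · i) hq
    simp only [coeff_map, coeff_C_mul, eq_intCast] at this
    rw [mul_comm, ← this, Rat.num_intCast]
  have hdeg : q.natDegree = P.natDegree := by
    rw [← natDegree_map_eq_of_injective (RingHom.injective_int (Int.castRingHom ℚ)) q, hq,
      natDegree_C_mul hd]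
  change (((Finset.range (P.natDegree + 1)).gcd fun i => (P.coeff i * lcmDen P).num : ℤ) : ℚ)
    / lcmDen P = _
  rw [content_eq_gcd_range_succ, hdeg]
  simp only [hnum]

lemma qcont_pos_and_exists_isPrimitive (P : ℚ[X]) (hP : P ≠ 0) :
    0 < qcont P ∧
      ∃ q : ℤ[X], q.IsPrimitive ∧ C (qcont P) * q.map (Int.castRingHom ℚ) = P := by
  obtain ⟨q, hq⟩ := exists_map_eq_C_lcmDen_mul P
  have hd0 := lcmDen_pos P
  have hd : (lcmDen P : ℚ) ≠ 0 := by exact_mod_cast hd0.ne'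
  have hq0 : q ≠ 0 := by
    rintro rfl
    exact hP (by simpa [hd0.ne'] using hq.symm)
  have hcont0 : 0 < q.content :=
    lt_of_le_of_ne (Int.nonneg_of_normalize_eq_self normalize_content)
      (Ne.symm (mt content_eq_zero_iff.1 hq0))
  rw [qcont_eq_content_div hq]
  refine ⟨by positivity, q.primPart, q.isPrimitive_primPart, ?_⟩
  apply mul_left_cancel₀ (C_ne_zero.2 hd)
  rw [← hq, ← mul_assoc, ← C_mul, mul_div_cancel₀ _ hd]
  conv_rhs => rw [q.eq_C_content_mul_primPart]
  simp [Polynomial.map_mul]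

lemma eq_of_C_mul_map_eq_C_mul_map {r r' : ℚ} (hr : 0 < r) (hr' : 0 < r') {q q' : ℤ[X]}
    (hq : q.IsPrimitive) (hq' : q'.IsPrimitive)
    (h : C r * q.map (Int.castRingHom ℚ) = C r' * q'.map (Int.castRingHom ℚ)) : r = r' := by
  set t := r / r'
  have ht : 0 < t := div_pos hr hr'
  have hmap : q'.map (Int.castRingHom ℚ) = C t * q.map (Int.castRingHom ℚ) := by
    apply mul_left_cancel₀ (C_ne_zero.2 hr'.ne')
    rw [← h, ← mul_assoc, ← C_mul, mul_div_cancel₀ _ hr'.ne']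
  have hint : C (t.den : ℤ) * q' = C t.num * q := by
    apply map_injective _ (RingHom.injective_int (Int.castRingHom ℚ))
    rw [Polynomial.map_mul, Polynomial.map_mul, map_C, map_C, hmap, ← mul_assoc, ← C_mul]
    simp
  have hnum : (t.den : ℤ) = t.num := by
    have := congrArg content hint
    rwa [content_C_mul, content_C_mul, hq.content_eq_one, hq'.content_eq_one, mul_one, mul_one,
      Int.normalize_of_nonneg (by positivity),
      Int.normalize_of_nonneg (Rat.num_nonneg.2 ht.le)] at this
  have ht1 : t = 1 := by
    rw [← Rat.num_div_den t, ← hnum]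
    simp
  exact (div_eq_one_iff_eq hr'.ne').1 ht1

lemma qcont_C_mul_map {r : ℚ} (hr : 0 < r) {q : ℤ[X]} (hq : q.IsPrimitive) :
    qcont (C r * q.map (Int.castRingHom ℚ)) = r := by
  have hP : C r * q.map (Int.castRingHom ℚ) ≠ 0 :=
    mul_ne_zero (C_ne_zero.2 hr.ne')
      ((Polynomial.map_ne_zero_iff (RingHom.injective_int _)).2 hq.ne_zero)
  obtain ⟨hpos, q', hq', hrep⟩ := qcont_pos_and_exists_isPrimitive _ hP
  exact eq_of_C_mul_map_eq_C_mul_map hpos hr hq' hq hrep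

lemma qcont_mul {P Q : ℚ[X]} (hP : P ≠ 0) (hQ : Q ≠ 0) :
    qcont (P * Q) = qcont P * qcont Q := by
  obtain ⟨hr, q, hq, hPq⟩ := qcont_pos_and_exists_isPrimitive P hP
  obtain ⟨hr', q', hq', hQq⟩ := qcont_pos_and_exists_isPrimitive Q hQ
  calc qcont (P * Q) = qcont (C (qcont P * qcont Q) * (q * q').map (Int.castRingHom ℚ)) := by
        rw [C_mul, Polynomial.map_mul, mul_mul_mul_comm, hPq, hQq]
    _ = qcont P * qcont Q := qcont_C_mul_map (mul_pos hr hr') (hq.mul hq')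

lemma qcont_pow {P : ℚ[X]} (hP : P ≠ 0) (k : ℕ) : qcont (P ^ k) = qcont P ^ k := by
  induction k with
  | zero => simpa using qcont_C_mul_map one_pos isPrimitive_one
  | succ k ih => rw [pow_succ, qcont_mul (pow_ne_zero k hP) hP, ih, pow_succ]

lemma qnorm_le {P : ℚ[X]} {b : ℚ} (h : ∀ i, |P.coeff i| ≤ b) : qnorm P ≤ b :=
  Finset.sup'_le _ _ fun i _ => h i

lemma qcont_le_qnorm {P : ℚ[X]} (hP : P ≠ 0) : qcont P ≤ qnorm P := by
  obtain ⟨hr, q, hq, hrep⟩ := qcont_pos_and_exists_isPrimitive P hP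
  have hlead : (1 : ℚ) ≤ |(q.leadingCoeff : ℚ)| := by
    exact_mod_cast Int.one_le_abs (leadingCoeff_ne_zero.2 hq.ne_zero)
  calc qcont P ≤ qcont P * |(q.leadingCoeff : ℚ)| := le_mul_of_one_le_right hr.le hlead
    _ = |P.coeff q.natDegree| := by
      conv_rhs => rw [← hrep]
      rw [coeff_C_mul, coeff_map, eq_intCast, abs_mul, abs_of_pos hr, leadingCoeff]
    _ ≤ qnorm P := abs_coeff_le_qnorm P _

lemma one_le_qheight {P : ℚ[X]} (hP : P ≠ 0) : 1 ≤ qheight P :=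
  (one_le_div (qcont_pos hP)).2 (qcont_le_qnorm hP)

lemma abs_coeff_X_pow_mul_le_qnorm (Q : ℚ[X]) (i j : ℕ) :
    |(X ^ j * Q).coeff i| ≤ qnorm Q := by
  rw [coeff_X_pow_mul']
  split_ifs
  · exact abs_coeff_le_qnorm Q _
  · simpa using qnorm_nonneg Q

lemma qnorm_mul_le (P Q : ℚ[X]) :
    qnorm (P * Q) ≤ (P.natDegree + 1) * qnorm P * qnorm Q := by
  refine qnorm_le fun i => ?_
  have hcoeff : (P * Q).coeff i =
      ∑ j ∈ Finset.range (P.natDegree + 1), P.coeff j * (X ^ j * Q).coeff i := by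
    nth_rewrite 1 [P.as_sum_range_C_mul_X_pow]
    rw [Finset.sum_mul, finsetSum_coeff]
    exact Finset.sum_congr rfl fun j _ => by rw [mul_assoc, coeff_C_mul]
  calc |(P * Q).coeff i|
      ≤ ∑ j ∈ Finset.range (P.natDegree + 1), |P.coeff j| * |(X ^ j * Q).coeff i| := by
        rw [hcoeff]
        refine (Finset.abs_sum_le_sum_abs _ _).trans_eq ?_
        simp only [abs_mul]
    _ ≤ ∑ _j ∈ Finset.range (P.natDegree + 1), qnorm P * qnorm Q :=
        Finset.sum_le_sum fun j _ => by
          have := qnorm_nonneg P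
          gcongr
          exacts [abs_coeff_le_qnorm P j, abs_coeff_X_pow_mul_le_qnorm Q i j]
    _ = (P.natDegree + 1) * qnorm P * qnorm Q := by
        rw [Finset.sum_const, Finset.card_range, nsmul_eq_mul, Nat.cast_succ, mul_assoc]

lemma qnorm_pow_le (P : ℚ[X]) (k : ℕ) :
    qnorm (P ^ k) ≤ ((P.natDegree : ℚ) + 1) ^ k * qnorm P ^ k := by
  induction k with
  | zero => simpa using qnorm_le (P := 1) fun i => by rw [coeff_one]; split_ifs <;> simp
  | succ k ih =>
    have := qnorm_nonneg P
    calc qnorm (P ^ (k + 1)) ≤ (P.natDegree + 1) * qnorm P * qnorm (P ^ k) := by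
          rw [pow_succ']
          exact qnorm_mul_le P _
      _ ≤ (P.natDegree + 1) * qnorm P * (((P.natDegree : ℚ) + 1) ^ k * qnorm P ^ k) := by
          gcongr
      _ = ((P.natDegree : ℚ) + 1) ^ (k + 1) * qnorm P ^ (k + 1) := by ring

lemma qheight_pow_le {P : ℚ[X]} (hP : P ≠ 0) (k : ℕ) :
    qheight (P ^ k) ≤ ((P.natDegree : ℚ) + 1) ^ k * qheight P ^ k := by
  rw [qheight, qheight, qcont_pow hP, div_pow, ← mul_div_assoc]
  exact div_le_div_of_nonneg_right (qnorm_pow_le P k) (pow_pos (qcont_pos hP) k).le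

lemma exists_pow_le_and_balanced {D n H X : ℝ} (hD : 0 < D) (hDn : D ≤ n) (hH : 1 ≤ H) :
    ∃ k : ℕ, 1 ≤ k ∧ k * D ≤ n ∧ (k = 1 ∨ H ^ k ≤ X) ∧
      (n ≤ 2 * k * D ∨ X ≤ H ^ (2 * k)) := by
  rcases le_or_gt X (H ^ 2) with hX | hX
  · exact ⟨1, le_rfl, by simpa using hDn, Or.inl rfl, Or.inr (by simpa using hX)⟩
  set N := ⌊n / D⌋₊
  have hN1 : 1 ≤ N := Nat.le_floor (by rwa [Nat.cast_one, one_le_div hD])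
  have hND : N * D ≤ n := (le_div_iff₀ hD).1 (Nat.floor_le (div_nonneg (hD.le.trans hDn) hD.le))
  have hNn : n < (N + 1) * D := (div_lt_iff₀ hD).1 (Nat.lt_floor_add_one _)
  set k := Nat.findGreatest (fun k => H ^ k ≤ X) N
  have hH1X : H ^ 1 ≤ X := by simpa using (le_self_pow₀ hH two_ne_zero).trans hX.le
  have hk1 : 1 ≤ k := Nat.le_findGreatest hN1 hH1X
  have hkN : k ≤ N := Nat.findGreatest_le N
  refine ⟨k, hk1, (mul_le_mul_of_nonneg_right (by exact_mod_cast hkN) hD.le).trans hND,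
    Or.inr (Nat.findGreatest_spec (P := fun k => H ^ k ≤ X) hN1 hH1X), ?_⟩
  rcases hkN.eq_or_lt with hkN | hkN
  · left
    have : (1 : ℝ) ≤ N := by exact_mod_cast hN1
    rw [hkN]
    nlinarith
  · right
    have hnext : ¬H ^ (k + 1) ≤ X := Nat.findGreatest_is_greatest (Nat.lt_succ_self k) hkN
    exact (not_le.1 hnext).le.trans (pow_le_pow_right₀ hH (by omega))

lemma rpow_half_le_pow {D n H X : ℝ} {k : ℕ} (hD : 0 ≤ D) (hn : 0 ≤ n) (hH : 1 ≤ H)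
    (hX : 1 ≤ X) (h : n ≤ 2 * k * D ∨ X ≤ H ^ (2 * k)) :
    X ^ (n / 2) ≤ (X ^ D * H ^ n) ^ k := by
  have hXk : 1 ≤ X ^ (D * k) := Real.one_le_rpow hX (by positivity)
  have hHk : 1 ≤ H ^ (n * k) := Real.one_le_rpow hH (by positivity)
  rw [mul_pow, ← Real.rpow_mul_natCast (by positivity), ← Real.rpow_mul_natCast (by positivity)]
  rcases h with h | h
  · calc X ^ (n / 2) ≤ X ^ (D * k) := Real.rpow_le_rpow_of_exponent_le hX (by linarith)
      _ ≤ X ^ (D * k) * H ^ (n * k) := le_mul_of_one_le_right (by positivity) hHk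
  · calc X ^ (n / 2) ≤ (H ^ (2 * k)) ^ (n / 2) := by gcongr
      _ = H ^ (n * k) := by
        rw [← Real.rpow_natCast, ← Real.rpow_mul (by positivity)]
        push_cast
        ring_nf
      _ ≤ X ^ (D * k) * H ^ (n * k) := le_mul_of_one_le_left (by positivity) hXk

lemma pow_lt_rpow_neg_of_lt_rpow_neg {π M Y c : ℝ} {k : ℕ} (hπ : 0 ≤ π) (hk : k ≠ 0)
    (hc : 0 ≤ c) (hM : 0 ≤ M) (hY : 0 < Y) (hYM : Y ≤ M ^ k) (h : π < M ^ (-c)) :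
    π ^ k < Y ^ (-c) :=
  calc π ^ k < (M ^ (-c)) ^ k := pow_lt_pow_left₀ h hπ hk
    _ = (M ^ k) ^ (-c) := Real.rpow_pow_comm hM _ _
    _ ≤ Y ^ (-c) := Real.rpow_le_rpow_of_nonpos hY hYM (neg_nonpos.2 hc)

lemma qheight_pow_le_sq {P : ℚ[X]} (hP : P ≠ 0) {k : ℕ} {n X : ℝ}
    (hkn : k * (P.natDegree : ℝ) ≤ n) (hX : Real.exp n ≤ X)
    (hHX : (qheight P : ℝ) ^ k ≤ X) :
    (qheight (P ^ k) : ℝ) ≤ X ^ (2 : ℝ) := by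
  have hX0 : 0 ≤ X := (Real.exp_pos n).le.trans hX
  have hH0 : (0 : ℝ) ≤ qheight P := by exact_mod_cast zero_le_one.trans (one_le_qheight hP)
  calc (qheight (P ^ k) : ℝ) ≤ ((P.natDegree : ℝ) + 1) ^ k * (qheight P : ℝ) ^ k := by
        exact_mod_cast qheight_pow_le hP k
    _ ≤ Real.exp (k * P.natDegree) * X := by
        rw [Real.exp_nat_mul]
        gcongr
        exact Real.add_one_le_exp _
    _ ≤ X * X := by gcongr; exact (Real.exp_le_exp.2 hkn).trans hX
    _ = X ^ (2 : ℝ) := by rw [Real.rpow_two, sq]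

lemma prod_norm_aeval_pow_div_qcont {ι K : Type*} [Fintype ι] [NormedField K] [Algebra ℚ K]
    (ξ : ι → K) {P : ℚ[X]} (hP : P ≠ 0) (k : ℕ) :
    ∏ i, ‖aeval (ξ i) (P ^ k)‖ / (qcont (P ^ k) : ℝ) =
      (∏ i, ‖aeval (ξ i) P‖ / (qcont P : ℝ)) ^ k := by
  simp only [← Finset.prod_pow, map_pow, norm_pow, qcont_pow hP, Rat.cast_pow, div_pow]

theorem stmt_15 (c n X : ℝ) (hc : 0 < c) (hn : 0 < n) (hX : Real.exp n ≤ X)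
    (s : ℕ) (ξ : Fin s → ℂ) (R : Polynomial ℚ) (hR : Irreducible R)
    (hdeg : (R.natDegree : ℝ) ≤ n) (hht : (qheight R : ℝ) ≤ X ^ (2 : ℝ))
    (hsmall : ∏ i, ‖Polynomial.aeval (ξ i) R‖ / (qcont R : ℝ) <
      (X ^ (R.natDegree : ℝ) * (qheight R : ℝ) ^ n) ^ (-(c / 2))) :
    ∃ k : ℕ, 1 ≤ k ∧
      ((R ^ k).natDegree : ℝ) ≤ n ∧
      (qheight (R ^ k) : ℝ) ≤ X ^ (2 : ℝ) ∧
      ∏ i, ‖Polynomial.aeval (ξ i) (R ^ k)‖ / (qcont (R ^ k) : ℝ) <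
        X ^ (-(c * n / 4)) := by
  have hR0 : R ≠ 0 := hR.ne_zero
  have hD : (0 : ℝ) < R.natDegree := by exact_mod_cast hR.natDegree_pos
  have hX1 : 1 < X := (Real.one_lt_exp_iff.2 hn).trans_le hX
  have hH : (1 : ℝ) ≤ qheight R := by exact_mod_cast one_le_qheight hR0
  obtain ⟨k, hk1, hkn, hkH, hbal⟩ := exists_pow_le_and_balanced (X := X) hD hdeg hH
  refine ⟨k, hk1, by rwa [natDegree_pow, Nat.cast_mul], ?_, ?_⟩
  · rcases hkH with rfl | hkH
    · simpa using hht
    · exact qheight_pow_le_sq hR0 hkn hX hkH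
  · rw [prod_norm_aeval_pow_div_qcont ξ hR0, show -(c * n / 4) = n / 2 * -(c / 2) by ring,
      Real.rpow_mul (by positivity)]
    have hcont : (0 : ℝ) < qcont R := by exact_mod_cast qcont_pos hR0
    exact pow_lt_rpow_neg_of_lt_rpow_neg
      (Finset.prod_nonneg fun i _ => div_nonneg (norm_nonneg _) hcont.le) (by omega)
      (by positivity) (by positivity) (by positivity)
      (rpow_half_le_pow hD.le hn.le hH hX1.le hbal) hsmall
end

section
/- Let m ≥ 1 be an integer, let ξ₁, ..., ξ_m be complex numbers, and let β, σ₁, ..., σ_m, τ, ν be positive reals with σ₁ + ⋯ + σ_m + τ < 1 and 1 < ν < 1 + β − σ₁ − ⋯ − σ_m − τ. Then for each sufficiently large integer n ≥ 1, there exists a nonzero polynomial P_n ∈ ℤ[T] of degree at most n and height at most exp(n^β) such that |P_n^{[j]}(i₁ξ₁ + ⋯ + i_m ξ_m)| ≤ exp(−n^ν) for all integers i₁, ..., i_m, j with 0 ≤ i_k ≤ n^{σ_k} for each k and 0 ≤ j ≤ n^τ. -/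
/-!
Siegel's lemma: the coefficients of `P` are `n + 1` integer unknowns in `[-H, H]` with
`H ≈ exp (n ^ β)`, and each condition is a complex linear form in them whose coefficients
`C(d, j) z ^ (d - j)` have size `exp (O (n log n))`. There are `≍ n ^ (σ₁ + ⋯ + σₘ + τ)`
conditions, so the number of boxes of side `exp (-n ^ ν)` needed to cover their values is
`exp (O (n ^ (σ₁ + ⋯ + σₘ + τ + max β ν)))`, which is eventually smaller than the number
`exp (n ^ (1 + β))` of candidate polynomials; the difference of two polynomials falling into
the same box is the required `P`.
-/

open Finset Filter Polynomial

theorem Int.floor_mem_Icc_of_abs_le {R : Type*} [CommRing R] [LinearOrder R]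
    [IsStrictOrderedRing R] [FloorRing R] {x : R} {N : ℕ} (h : |x| ≤ N) :
    ⌊x⌋ ∈ Icc (-(N : ℤ)) N := by
  rw [mem_Icc, Int.le_floor, Int.floor_le_iff]
  push_cast
  constructor <;> linarith [neg_abs_le x, le_abs_self x]

theorem abs_sub_lt_of_floor_div_eq {K : Type*} [Field K] [LinearOrder K] [IsStrictOrderedRing K]
    [FloorRing K] {x y δ : K} (hδ : 0 < δ) (h : ⌊x / δ⌋ = ⌊y / δ⌋) : |x - y| < δ := by
  have := Int.abs_sub_lt_one_of_floor_eq_floor h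
  rwa [← sub_div, abs_div, abs_of_pos hδ, div_lt_one hδ] at this

theorem exists_ne_zero_int_vec_norm_sum_mul_le {ι α : Type*} [Fintype ι] [Fintype α]
    (c : α → ι → ℂ) {H : ℕ} {C δ : ℝ} (hδ : 0 < δ) (hc : ∀ a i, ‖c a i‖ ≤ C)
    (hcard : (2 * ⌈Fintype.card ι * H * C / δ⌉₊ + 1) ^ (2 * Fintype.card α) <
      (H + 1) ^ Fintype.card ι) :
    ∃ q : ι → ℤ, q ≠ 0 ∧ (∀ i, |q i| ≤ H) ∧ ∀ a, ‖∑ i, (q i : ℂ) * c a i‖ ≤ 2 * δ := by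
  classical
  set N := ⌈Fintype.card ι * H * C / δ⌉₊
  let L : (ι → Fin (H + 1)) → α → ℂ := fun p a => ∑ i, ((p i : ℕ) : ℂ) * c a i
  let f : (ι → Fin (H + 1)) → α → ℤ × ℤ :=
    fun p a => (⌊(L p a).re / δ⌋, ⌊(L p a).im / δ⌋)
  let box : Finset (α → ℤ × ℤ) := Fintype.piFinset fun _ => Icc (-(N : ℤ)) N ×ˢ Icc (-(N : ℤ)) N
  have hL : ∀ p a, ‖L p a‖ ≤ Fintype.card ι * H * C := fun p a =>
    calc ‖L p a‖ ≤ ∑ i, ‖((p i : ℕ) : ℂ) * c a i‖ := norm_sum_le _ _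
      _ ≤ ∑ _i : ι, (H * C : ℝ) := sum_le_sum fun i _ => by
          rw [norm_mul, Complex.norm_natCast]
          exact mul_le_mul (by exact_mod_cast Nat.lt_succ_iff.mp (p i).2) (hc a i)
            (norm_nonneg _) (Nat.cast_nonneg _)
      _ = Fintype.card ι * H * C := by simp [mul_assoc]
  have hmem : ∀ {x : ℝ}, |x| ≤ Fintype.card ι * H * C → ⌊x / δ⌋ ∈ Icc (-(N : ℤ)) N :=
    fun hx => Int.floor_mem_Icc_of_abs_le <| by
      rw [abs_div, abs_of_pos hδ]
      exact (div_le_div_of_nonneg_right hx hδ.le).trans (Nat.le_ceil _)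
  have hmaps : ∀ p ∈ (univ : Finset (ι → Fin (H + 1))), f p ∈ box := fun p _ =>
    Fintype.mem_piFinset.2 fun a => mem_product.2
      ⟨hmem ((Complex.abs_re_le_norm _).trans (hL p a)),
        hmem ((Complex.abs_im_le_norm _).trans (hL p a))⟩
  have hbox : #box < #(univ : Finset (ι → Fin (H + 1))) := by
    have hIcc : #(Icc (-(N : ℤ)) N) = 2 * N + 1 := by rw [Int.card_Icc]; omega
    simpa [box, Fintype.card_piFinset, hIcc, ← sq, ← pow_mul] using hcard
  obtain ⟨p, -, p', -, hne, hfp⟩ := exists_ne_map_eq_of_card_lt_of_maps_to hbox hmaps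
  refine ⟨fun i => (p i : ℕ) - (p' i : ℕ), fun h => hne (funext fun i => Fin.ext ?_), fun i => ?_,
    fun a => ?_⟩
  · simpa [sub_eq_zero] using congrFun h i
  · have := (p i).2; have := (p' i).2
    dsimp only
    rw [abs_le]; omega
  · have hre := congrArg Prod.fst (congrFun hfp a)
    have him := congrArg Prod.snd (congrFun hfp a)
    calc ‖∑ i, (((p i : ℕ) - (p' i : ℕ) : ℤ) : ℂ) * c a i‖ = ‖L p a - L p' a‖ := by
          simp [L, ← sum_sub_distrib, sub_mul]
      _ ≤ |(L p a - L p' a).re| + |(L p a - L p' a).im| := Complex.norm_le_abs_re_add_abs_im _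
      _ ≤ δ + δ := by
          gcongr
          · simpa using (abs_sub_lt_of_floor_div_eq hδ hre).le
          · simpa using (abs_sub_lt_of_floor_div_eq hδ him).le
      _ = 2 * δ := by ring

theorem Polynomial.eval_hasseDeriv_eq_sum_fin {R : Type*} [CommSemiring R] {P : R[X]} {n : ℕ}
    (hP : P.natDegree < n) (j : ℕ) (z : R) :
    (hasseDeriv j P).eval z = ∑ d : Fin n, P.coeff d * ((d : ℕ).choose j * z ^ ((d : ℕ) - j)) := by
  conv_lhs => rw [P.as_sum_range' n hP]
  simp only [map_sum, hasseDeriv_monomial, eval_finsetSum, eval_monomial]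
  rw [← Fin.sum_univ_eq_sum_range]
  refine sum_congr rfl fun d _ => ?_
  ring

theorem norm_choose_mul_pow_le {z : ℂ} {R : ℝ} (hz : ‖z‖ ≤ R) {d n : ℕ} (hd : d ≤ n) (j : ℕ) :
    ‖(d.choose j : ℂ) * z ^ (d - j)‖ ≤ (2 * (R + 1)) ^ n := by
  have hR : 1 ≤ R + 1 := by linarith [norm_nonneg z]
  rw [norm_mul, Complex.norm_natCast, norm_pow, mul_pow]
  gcongr
  · exact_mod_cast (Nat.choose_le_two_pow d j).trans (Nat.pow_le_pow_right two_pos hd)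
  · calc ‖z‖ ^ (d - j) ≤ (R + 1) ^ (d - j) := by gcongr; linarith
      _ ≤ (R + 1) ^ n := pow_le_pow_right₀ hR (by omega)

theorem exists_int_poly_norm_eval_hasseDeriv_le {α : Type*} [Fintype α] (z : α → ℂ) (j : α → ℕ)
    (n H : ℕ) {R δ : ℝ} (hδ : 0 < δ) (hz : ∀ a, ‖z a‖ ≤ R)
    (hcard : (2 * ⌈(n + 1) * H * (2 * (R + 1)) ^ n / δ⌉₊ + 1) ^ (2 * Fintype.card α) <
      (H + 1) ^ (n + 1)) :
    ∃ P : ℤ[X], P ≠ 0 ∧ P.natDegree ≤ n ∧ (∀ i, |P.coeff i| ≤ H) ∧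
      ∀ a, ‖(hasseDeriv (j a) (P.map (Int.castRingHom ℂ))).eval (z a)‖ ≤ 2 * δ := by
  obtain ⟨q, hq0, hqH, hq⟩ := exists_ne_zero_int_vec_norm_sum_mul_le
    (fun a (d : Fin (n + 1)) => ((d : ℕ).choose (j a) : ℂ) * z a ^ ((d : ℕ) - j a)) hδ
    (fun a d => norm_choose_mul_pow_le (hz a) (Nat.lt_succ_iff.1 d.2) (j a))
    (by simpa using hcard)
  let Q := (degreeLTEquiv ℤ (n + 1)).symm q
  have hQ : ∀ d : Fin (n + 1), (Q : ℤ[X]).coeff d = q d :=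
    congrFun ((degreeLTEquiv ℤ (n + 1)).apply_symm_apply q)
  have hdeg : (Q : ℤ[X]).natDegree ≤ n :=
    natDegree_le_of_degree_le <| mem_degreeLE.1 <| (degreeLT_succ_eq_degreeLE (R := ℤ)) ▸ Q.2
  refine ⟨Q, ?_, hdeg, fun i => ?_, fun a => ?_⟩
  · have : Q ≠ 0 := (LinearEquiv.map_ne_zero_iff _).2 hq0
    simpa using this
  · rcases le_or_gt i n with hi | hi
    · simpa [hQ ⟨i, Nat.lt_succ_of_le hi⟩] using hqH ⟨i, Nat.lt_succ_of_le hi⟩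
    · simp [coeff_eq_zero_of_natDegree_lt (hdeg.trans_lt hi)]
  · rw [eval_hasseDeriv_eq_sum_fin ((natDegree_map_le).trans_lt (Nat.lt_succ_of_le hdeg))]
    simpa [hQ] using hq a

theorem natFloor_rpow_add_one_le {x a : ℝ} (hx : 1 ≤ x) (ha : 0 ≤ a) :
    (⌊x ^ a⌋₊ : ℝ) + 1 ≤ 2 * x ^ a := by
  linarith [Nat.floor_le (Real.rpow_nonneg (zero_le_one.trans hx) a), Real.one_le_rpow hx ha]

theorem card_pi_fin_natFloor_rpow_le {ι : Type*} [Fintype ι] [DecidableEq ι] {x : ℝ}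
    (hx : 1 ≤ x) {σ : ι → ℝ} (hσ : ∀ k, 0 ≤ σ k) {τ : ℝ} (hτ : 0 ≤ τ) :
    (Fintype.card (((k : ι) → Fin (⌊x ^ σ k⌋₊ + 1)) × Fin (⌊x ^ τ⌋₊ + 1)) : ℝ) ≤
      2 ^ (Fintype.card ι + 1) * x ^ ((∑ k, σ k) + τ) := by
  have hx0 : 0 < x := zero_lt_one.trans_le hx
  simp only [Fintype.card_prod, Fintype.card_pi, Fintype.card_fin]
  push_cast
  calc (∏ k, ((⌊x ^ σ k⌋₊ : ℝ) + 1)) * ((⌊x ^ τ⌋₊ : ℝ) + 1)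
      ≤ (∏ k, (2 * x ^ σ k)) * (2 * x ^ τ) := by
        gcongr with k
        · exact natFloor_rpow_add_one_le hx (hσ k)
        · exact natFloor_rpow_add_one_le hx hτ
    _ = 2 ^ (Fintype.card ι + 1) * x ^ ((∑ k, σ k) + τ) := by
        rw [prod_mul_distrib, prod_const, Real.rpow_add hx0, Real.rpow_sum_of_pos hx0, card_univ]
        ring

theorem eventually_mul_rpow_lt_rpow (C : ℝ) {a b : ℝ} (hab : a < b) :
    ∀ᶠ n : ℕ in atTop, C * (n : ℝ) ^ a < (n : ℝ) ^ b := by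
  have h := (tendsto_rpow_atTop (sub_pos.2 hab)).comp tendsto_natCast_atTop_atTop
  filter_upwards [h.eventually_gt_atTop C, eventually_ge_atTop 1] with n hC hn
  have hn0 : (0 : ℝ) < n := by exact_mod_cast hn
  calc C * (n : ℝ) ^ a < (n : ℝ) ^ (b - a) * (n : ℝ) ^ a :=
        mul_lt_mul_of_pos_right hC (Real.rpow_pos_of_pos hn0 a)
    _ = (n : ℝ) ^ b := by rw [← Real.rpow_add hn0, sub_add_cancel]

theorem eventually_two_mul_card_pi_fin_natFloor_rpow_mul_lt {ι : Type*} [Fintype ι]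
    [DecidableEq ι] {σ : ι → ℝ} (hσ : ∀ k, 0 ≤ σ k) {τ β γ K : ℝ} (hτ : 0 ≤ τ) (hK : 0 ≤ K)
    (hgap : (∑ k, σ k) + τ + γ < 1 + β) :
    ∀ᶠ n : ℕ in atTop, 2 * (Fintype.card (((k : ι) → Fin (⌊(n : ℝ) ^ σ k⌋₊ + 1)) ×
      Fin (⌊(n : ℝ) ^ τ⌋₊ + 1)) : ℝ) * (K * (n : ℝ) ^ γ) < (n : ℝ) ^ (1 + β) := by
  filter_upwards [eventually_mul_rpow_lt_rpow (2 ^ (Fintype.card ι + 2) * K) hgap,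
    eventually_ge_atTop 1] with n hgrowth hn
  have hx : (1 : ℝ) ≤ n := by exact_mod_cast hn
  calc _ ≤ 2 * (2 ^ (Fintype.card ι + 1) * (n : ℝ) ^ ((∑ k, σ k) + τ)) * (K * (n : ℝ) ^ γ) := by
        gcongr
        exact card_pi_fin_natFloor_rpow_le hx hσ hτ
    _ = 2 ^ (Fintype.card ι + 2) * K * (n : ℝ) ^ ((∑ k, σ k) + τ + γ) := by
        rw [Real.rpow_add (by positivity) _ γ]; ring
    _ < (n : ℝ) ^ (1 + β) := hgrowth

theorem pow_lt_natFloor_exp_add_one_pow {X T n : ℕ} {E β : ℝ} (hn : 0 < n)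
    (hX : (X : ℝ) ≤ Real.exp E) (hE : 2 * T * E < (n : ℝ) ^ (1 + β)) :
    X ^ (2 * T) < (⌊Real.exp ((n : ℝ) ^ β)⌋₊ + 1) ^ (n + 1) := by
  have hn0 : (0 : ℝ) < n := by exact_mod_cast hn
  suffices (X : ℝ) ^ (2 * T) < ((⌊Real.exp ((n : ℝ) ^ β)⌋₊ : ℝ) + 1) ^ (n + 1) by
    exact_mod_cast this
  calc (X : ℝ) ^ (2 * T) ≤ Real.exp E ^ (2 * T) := by gcongr
    _ = Real.exp (2 * T * E) := by rw [← Real.exp_nat_mul]; push_cast; ring_nf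
    _ < Real.exp ((n + 1) * (n : ℝ) ^ β) := by
        rw [Real.exp_lt_exp]
        refine hE.trans_le ?_
        rw [Real.rpow_add hn0, Real.rpow_one]
        gcongr; linarith
    _ = Real.exp ((n : ℝ) ^ β) ^ (n + 1) := by rw [← Real.exp_nat_mul]; push_cast; ring_nf
    _ < ((⌊Real.exp ((n : ℝ) ^ β)⌋₊ : ℝ) + 1) ^ (n + 1) := by
        gcongr
        exact Nat.lt_floor_add_one _

theorem mul_log_mul_le_rpow {c ε x : ℝ} (hc : 0 ≤ c) (hε : 0 < ε) (hx : 0 ≤ x) :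
    x * Real.log (c * x) ≤ c ^ ε / ε * x ^ (1 + ε) := by
  calc x * Real.log (c * x) ≤ x * ((c * x) ^ ε / ε) :=
        mul_le_mul_of_nonneg_left (Real.log_le_rpow_div (by positivity) hε) hx
    _ = c ^ ε / ε * x ^ (1 + ε) := by
        rw [Real.mul_rpow hc hx, Real.rpow_add' hx (by linarith), Real.rpow_one]
        ring

theorem two_mul_ceil_add_one_le_exp {n : ℕ} (hn : 1 ≤ n) {S β ν γ : ℝ} (hS : 0 ≤ S)
    (hγ : 1 < γ) (hβγ : β ≤ γ) (hνγ : ν ≤ γ) :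
    ((2 * ⌈(n + 1) * ⌊Real.exp ((n : ℝ) ^ β)⌋₊ * (2 * (n * S + 1)) ^ n /
        (Real.exp (-(n : ℝ) ^ ν) / 2)⌉₊ + 1 : ℕ) : ℝ) ≤
      Real.exp ((13 + (2 * (S + 1)) ^ (γ - 1) / (γ - 1)) * (n : ℝ) ^ γ) := by
  have hx : (1 : ℝ) ≤ n := by exact_mod_cast hn
  set x : ℝ := (n : ℝ)
  have hx0 : 0 < x := zero_lt_one.trans_le hx
  set H := ⌊Real.exp (x ^ β)⌋₊
  have hH1 : (1 : ℝ) ≤ H := by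
    exact_mod_cast Nat.one_le_floor_iff _ |>.2 (Real.one_le_exp (by positivity))
  have hH : (H : ℝ) ≤ Real.exp (x ^ β) := Nat.floor_le (Real.exp_nonneg _)
  set M := (x + 1) * H * (2 * (x * S + 1)) ^ n / (Real.exp (-x ^ ν) / 2)
  have hM : M = 2 * ((x + 1) * H * (2 * (x * S + 1)) ^ n * Real.exp (x ^ ν)) := by
    simp only [M, Real.exp_neg]; field_simp
  have hpow : (2 * (x * S + 1)) ^ n ≤ Real.exp (x * Real.log (2 * (S + 1) * x)) := by
    have hpos : 0 < 2 * (S + 1) * x := by positivity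
    calc (2 * (x * S + 1)) ^ n ≤ (2 * (S + 1) * x) ^ n :=
          pow_le_pow_left₀ (by positivity) (by nlinarith) n
      _ = Real.exp (x * Real.log (2 * (S + 1) * x)) := by
        rw [← Real.exp_log hpos, ← Real.exp_nat_mul, Real.exp_log hpos]
  have hM1 : 1 ≤ M := by
    rw [hM]
    have h1 : 1 ≤ (2 * (x * S + 1)) ^ n := one_le_pow₀ (by nlinarith)
    have h2 : 1 ≤ Real.exp (x ^ ν) := Real.one_le_exp (by positivity)
    have : 1 ≤ (x + 1) * H * (2 * (x * S + 1)) ^ n * Real.exp (x ^ ν) :=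
      one_le_mul_of_one_le_of_one_le (one_le_mul_of_one_le_of_one_le
        (one_le_mul_of_one_le_of_one_le (by linarith) hH1) h1) h2
    linarith
  have hlog := mul_log_mul_le_rpow (c := 2 * (S + 1)) (by positivity) (sub_pos.2 hγ) hx0.le
  rw [add_sub_cancel] at hlog
  calc ((2 * ⌈M⌉₊ + 1 : ℕ) : ℝ) ≤ 5 * M := by
        push_cast
        linarith [Nat.ceil_lt_two_mul (a := M) (by linarith)]
    _ ≤ Real.exp 10 * Real.exp x * Real.exp (x ^ β) *
          Real.exp (x * Real.log (2 * (S + 1) * x)) * Real.exp (x ^ ν) := by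
        have h10 : (10 : ℝ) ≤ Real.exp 10 := by linarith [Real.add_one_le_exp 10]
        have hx1 : x + 1 ≤ Real.exp x := Real.add_one_le_exp x
        calc 5 * M = 10 * (x + 1) * H * (2 * (x * S + 1)) ^ n * Real.exp (x ^ ν) := by
              rw [hM]; ring
          _ ≤ _ := by gcongr
    _ = Real.exp (10 + x + x ^ β + x * Real.log (2 * (S + 1) * x) + x ^ ν) := by
        simp only [Real.exp_add]
    _ ≤ Real.exp ((13 + (2 * (S + 1)) ^ (γ - 1) / (γ - 1)) * x ^ γ) := by
        gcongr
        have h1 : 1 ≤ x ^ γ := Real.one_le_rpow hx (by linarith)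
        have h2 : x ≤ x ^ γ := by
          simpa using Real.rpow_le_rpow_of_exponent_le hx hγ.le
        have h3 : x ^ β ≤ x ^ γ := Real.rpow_le_rpow_of_exponent_le hx hβγ
        have h4 : x ^ ν ≤ x ^ γ := Real.rpow_le_rpow_of_exponent_le hx hνγ
        nlinarith

theorem norm_sum_natCast_mul_le {ι : Type*} [Fintype ι] {x : ℝ} (hx : 1 ≤ x) {σ : ι → ℝ}
    (hσ : ∀ k, σ k ≤ 1) (i : ι → ℕ) (hi : ∀ k, i k ≤ ⌊x ^ σ k⌋₊) (ξ : ι → ℂ) :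
    ‖∑ k, (i k : ℂ) * ξ k‖ ≤ x * ∑ k, ‖ξ k‖ := by
  rw [mul_sum]
  refine (norm_sum_le _ _).trans (sum_le_sum fun k _ => ?_)
  rw [norm_mul, Complex.norm_natCast]
  refine mul_le_mul_of_nonneg_right ?_ (norm_nonneg _)
  calc (i k : ℝ) ≤ ⌊x ^ σ k⌋₊ := by exact_mod_cast hi k
    _ ≤ x ^ σ k := Nat.floor_le (Real.rpow_nonneg (zero_le_one.trans hx) _)
    _ ≤ x := Real.rpow_le_self_of_one_le hx (hσ k)

theorem stmt_16_general (m : ℕ) (ξ : Fin m → ℂ) (β τ ν : ℝ) (σ : Fin m → ℝ)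
    (hσ : ∀ k, 0 < σ k) (hτ : 0 < τ) (hν1 : 1 < ν)
    (hsum : (∑ k, σ k) + τ < 1) (hν2 : ν < 1 + β - (∑ k, σ k) - τ) :
    ∃ N : ℕ, 1 ≤ N ∧ ∀ n : ℕ, N ≤ n →
      ∃ P : Polynomial ℤ, P ≠ 0 ∧ P.natDegree ≤ n ∧
        (∀ i, ((|P.coeff i| : ℤ) : ℝ) ≤ Real.exp ((n : ℝ) ^ β)) ∧
        ∀ (i : Fin m → ℕ) (j : ℕ),
          (∀ k, (i k : ℝ) ≤ (n : ℝ) ^ (σ k)) → ((j : ℝ) ≤ (n : ℝ) ^ τ) →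
          ‖(Polynomial.hasseDeriv j (P.map (Int.castRingHom ℂ))).eval
              (∑ k, (i k : ℂ) * ξ k)‖ ≤ Real.exp (-(n : ℝ) ^ ν) := by
  set γ := max β ν
  set K := 13 + (2 * (∑ k, ‖ξ k‖ + 1)) ^ (γ - 1) / (γ - 1)
  have hγ : 1 < γ := hν1.trans_le (le_max_right β ν)
  have hgap : (∑ k, σ k) + τ + γ < 1 + β := by
    linarith [max_lt (by linarith : β < 1 + β - (∑ k, σ k) - τ) hν2]
  have hσ1 : ∀ k, σ k ≤ 1 := fun k => by
    linarith [single_le_sum (fun k _ => (hσ k).le) (mem_univ k) (f := σ)]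
  have hK : 0 ≤ K := by have := sub_pos.2 hγ; positivity
  obtain ⟨N, hN⟩ := eventually_atTop.1 <|
    (eventually_two_mul_card_pi_fin_natFloor_rpow_mul_lt (fun k => (hσ k).le) hτ.le hK hgap).and
      (eventually_ge_atTop 1)
  refine ⟨max N 1, le_max_right N 1, fun n hn => ?_⟩
  obtain ⟨hcount, hn1⟩ := hN n (le_of_max_le_left hn)
  have hx : (1 : ℝ) ≤ n := by exact_mod_cast hn1
  obtain ⟨P, hP0, hPdeg, hPH, hP⟩ := exists_int_poly_norm_eval_hasseDeriv_le
    (α := ((k : Fin m) → Fin (⌊(n : ℝ) ^ σ k⌋₊ + 1)) × Fin (⌊(n : ℝ) ^ τ⌋₊ + 1))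
    (fun a => ∑ k, ((a.1 k : ℕ) : ℂ) * ξ k) (fun a => a.2) n ⌊Real.exp ((n : ℝ) ^ β)⌋₊
    (R := n * ∑ k, ‖ξ k‖) (δ := Real.exp (-(n : ℝ) ^ ν) / 2) (by positivity)
    (fun a => norm_sum_natCast_mul_le hx hσ1 _ (fun k => Nat.lt_succ_iff.1 (a.1 k).2) ξ)
    (pow_lt_natFloor_exp_add_one_pow hn1 (two_mul_ceil_add_one_le_exp hn1 (by positivity) hγ
      (le_max_left β ν) (le_max_right β ν)) hcount)
  refine ⟨P, hP0, hPdeg, fun i => ?_, fun i j hi hj => ?_⟩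
  · exact (Int.cast_le.2 (hPH i)).trans (by simpa using Nat.floor_le (Real.exp_nonneg _))
  · simpa [mul_div_cancel₀] using hP (fun k => ⟨i k, Nat.lt_succ_of_le (Nat.le_floor (hi k))⟩,
      ⟨j, Nat.lt_succ_of_le (Nat.le_floor hj)⟩)

theorem stmt_16 (m : ℕ) (hm : 1 ≤ m) (ξ : Fin m → ℂ) (β τ ν : ℝ) (σ : Fin m → ℝ)
    (hβ : 0 < β) (hσ : ∀ k, 0 < σ k) (hτ : 0 < τ) (hν : 0 < ν) (hν1 : 1 < ν)
    (hsum : (∑ k, σ k) + τ < 1) (hν2 : ν < 1 + β - (∑ k, σ k) - τ) :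
    ∃ N : ℕ, 1 ≤ N ∧ ∀ n : ℕ, N ≤ n →
      ∃ P : Polynomial ℤ, P ≠ 0 ∧ P.natDegree ≤ n ∧
        (∀ i, ((|P.coeff i| : ℤ) : ℝ) ≤ Real.exp ((n : ℝ) ^ β)) ∧
        ∀ (i : Fin m → ℕ) (j : ℕ),
          (∀ k, (i k : ℝ) ≤ (n : ℝ) ^ (σ k)) → ((j : ℝ) ≤ (n : ℝ) ^ τ) →
          ‖(Polynomial.hasseDeriv j (P.map (Int.castRingHom ℂ))).eval
              (∑ k, (i k : ℂ) * ξ k)‖ ≤ Real.exp (-(n : ℝ) ^ ν) :=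
  stmt_16_general m ξ β τ ν σ hσ hτ hν1 hsum hν2
end

section
/- Let m ≥ 0 be an integer and let P(T) = T^m · P̃(T) where P̃ ∈ ℂ[T]. Then for every ξ ∈ ℂ with ξ ≠ 0 and every integer j ≥ 0, P̃^{[j]}(ξ) = Σ_{h=0}^j (−1)^h C(m+h−1, h) ξ^{−m−h} P^{[j−h]}(ξ), where C(m+h−1,h) denotes a binomial coefficient (with the convention C(−1,0)=1 when m=h=0). -/
/-!
Expand at `ξ`: the Taylor polynomial `taylor ξ Q` has coefficients `Q^{[k]}(ξ)`, and `taylor` is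
multiplicative with `taylor ξ X = X + ξ`, so `taylor ξ P = (X + ξ) ^ m * taylor ξ P̃`. Since
`ξ ≠ 0`, `(X + ξ) ^ m = ξ ^ m (1 + X / ξ) ^ m` is invertible in `K⟦X⟧`, its inverse being
`ξ⁻ᵐ (1 - X)⁻ᵐ` rescaled by `-ξ⁻¹`; comparing the `j`-th coefficients of
`taylor ξ P̃ = (X + ξ)⁻ᵐ * taylor ξ P` gives the formula.
-/

open Finset Polynomial

namespace PowerSeries

theorem coeff_invOneSubPow {R : Type*} [CommRing R] (d n : ℕ) :
    coeff n (invOneSubPow R d : R⟦X⟧) = ((d + n - 1).choose n : R) := by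
  cases d with
  | zero => rcases n with _ | n <;> simp [invOneSubPow_zero, coeff_one]
  | succ d =>
    rw [invOneSubPow_val_succ_eq_mk_add_choose, coeff_mk, Nat.add_right_comm, Nat.add_sub_cancel,
      Nat.choose_symm_add]

variable {K : Type*} [Field K]

def invXAddCPow (ξ : K) (m : ℕ) : K⟦X⟧ :=
  mk fun h => (-1) ^ h * ((m + h - 1).choose h : K) * ξ ^ (-(m : ℤ) - h)

theorem invXAddCPow_eq {ξ : K} (hξ : ξ ≠ 0) (m : ℕ) :
    invXAddCPow ξ m = C (ξ ^ m)⁻¹ * rescale (-ξ⁻¹) (invOneSubPow K m : K⟦X⟧) := by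
  ext h
  rw [invXAddCPow, coeff_mk, coeff_C_mul, coeff_rescale, coeff_invOneSubPow, sub_eq_add_neg,
    zpow_add₀ hξ, zpow_neg, zpow_neg, zpow_natCast, zpow_natCast, neg_pow ξ⁻¹, inv_pow]
  ring

theorem invXAddCPow_mul_X_add_C_pow {ξ : K} (hξ : ξ ≠ 0) (m : ℕ) :
    invXAddCPow ξ m * (X + C ξ) ^ m = 1 := by
  have hX : X + C ξ = C ξ * rescale (-ξ⁻¹) (1 - X) := by
    rw [map_sub, map_one, rescale_X, mul_sub, mul_one, ← mul_assoc, ← map_mul, mul_neg,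
      mul_inv_cancel₀ hξ, map_neg, map_one, neg_one_mul, sub_neg_eq_add, add_comm]
  rw [invXAddCPow_eq hξ, hX, mul_pow, ← map_pow, ← map_pow, mul_mul_mul_comm, ← map_mul,
    inv_mul_cancel₀ (pow_ne_zero m hξ), ← map_mul, ← invOneSubPow_inv_eq_one_sub_pow, Units.val_inv,
    map_one, map_one, one_mul]

end PowerSeries

open PowerSeries in
theorem Polynomial.hasseDeriv_eval_eq_sum_hasseDeriv_X_pow_mul_eval {K : Type*} [Field K] (m : ℕ)
    (p : K[X]) {ξ : K} (hξ : ξ ≠ 0) (j : ℕ) :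
    (hasseDeriv j p).eval ξ = ∑ h ∈ range (j + 1), (-1 : K) ^ h * ((m + h - 1).choose h : K) *
      ξ ^ (-(m : ℤ) - h) * (hasseDeriv (j - h) (X ^ m * p)).eval ξ := by
  have htaylor : (taylor ξ p : K⟦X⟧) = invXAddCPow ξ m * taylor ξ (X ^ m * p) := by
    rw [taylor_mul, taylor_X_pow, coe_mul, coe_pow, coe_add, coe_X, coe_C, ← mul_assoc,
      invXAddCPow_mul_X_add_C_pow hξ, one_mul]
  rw [← taylor_coeff, ← Polynomial.coeff_coe, htaylor, PowerSeries.coeff_mul,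
    Finset.Nat.sum_antidiagonal_eq_sum_range_succ_mk]
  simp only [invXAddCPow, coeff_mk, Polynomial.coeff_coe, taylor_coeff]

theorem stmt_18 (m : ℕ) (Pt : Polynomial ℂ) (ξ : ℂ) (hξ : ξ ≠ 0) (j : ℕ) :
    (Polynomial.hasseDeriv j Pt).eval ξ =
      ∑ h ∈ Finset.range (j + 1),
        (-1 : ℂ) ^ h * (Nat.choose (m + h - 1) h : ℂ) * ξ ^ (-(m : ℤ) - h) *
          (Polynomial.hasseDeriv (j - h) (Polynomial.X ^ m * Pt)).eval ξ :=
  hasseDeriv_eval_eq_sum_hasseDeriv_X_pow_mul_eval m Pt hξ j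
end

section
/- Let s, t, m be positive integers with st ≤ m, let L be a field, let Q ∈ L[T], and let ξ₁, ..., ξ_s be distinct elements of L. Let φ, ψ : L[T]_{≤ m−1} → L^m be the L-linear maps defined by: φ(P)_k = (QP)^{[j]}(ξ_i) if k = i + js with 1 ≤ i ≤ s, 0 ≤ j < t, and φ(P)_k = P^{[k−1]}(0) if st < k ≤ m; while ψ(P)_k = P^{[k−1]}(0) for all k = 1, ..., m. Then for any polynomials P₁, ..., P_m in L[T]_{≤ m−1}: det(φ(P₁),...,φ(P_m)) = ± Δ^{t²} (∏_{i=1}^s Q(ξ_i))^t · det(ψ(P₁),...,ψ(P_m)), where Δ = ∏_{1 ≤ i < j ≤ s} (ξ_j − ξ_i) if s ≥ 2 and Δ = 1 if s = 1. -/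
open Polynomial Matrix Finset

private lemma taylor_XC_pow {L : Type*} [Field L] (x : L) (M : ℕ) :
    Polynomial.taylor x ((X - C x) ^ M) = X ^ M := by
  induction M with
  | zero => simp
  | succ M ih =>
    rw [pow_succ, taylor_mul, ih, pow_succ]
    congr 1
    rw [map_sub, taylor_X, taylor_C]; ring

private lemma hasse_eval_zero {L : Type*} [Field L] (x : L) (p : L[X]) (j M : ℕ) (hjM : j < M)
    (h : (X - C x) ^ M ∣ p) : (Polynomial.hasseDeriv j p).eval x = 0 := by
  obtain ⟨u, rfl⟩ := h
  rw [← taylor_coeff, taylor_mul, taylor_XC_pow, coeff_X_pow_mul',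
    if_neg (not_le.mpr hjM)]

private lemma hasse_eval_diag {L : Type*} [Field L] (x : L) (u : L[X]) (j : ℕ) :
    (Polynomial.hasseDeriv j ((X - C x) ^ j * u)).eval x = u.eval x := by
  rw [← taylor_coeff, taylor_mul, taylor_XC_pow, coeff_X_pow_mul', if_pos le_rfl,
    Nat.sub_self, taylor_coeff_zero]

private lemma hasse_expand {L : Type*} [Field L] (n j : ℕ) (x : L) (Q P : L[X])
    (hP : P.natDegree < n) :
    (Polynomial.hasseDeriv j (Q * P)).eval x
      = ∑ c ∈ Finset.range n, P.coeff c * (Polynomial.hasseDeriv j (Q * X ^ c)).eval x := by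
  conv_lhs => rw [P.as_sum_range' n hP]
  rw [Finset.mul_sum, map_sum, eval_finset_sum]
  refine Finset.sum_congr rfl fun c _ => ?_
  have : Q * (monomial c) (P.coeff c) = P.coeff c • (Q * X ^ c) := by
    rw [smul_eq_C_mul, ← C_mul_X_pow_eq_monomial]; ring
  rw [this, _root_.map_smul, eval_smul, smul_eq_mul]

private noncomputable def qaux {L : Type*} [Field L] {s : ℕ} (t : ℕ) (ξ : Fin s → L) (i : Fin s) (l : ℕ) :
    L[X] :=
  (X - C (ξ i)) ^ l * ∏ i'' ∈ Finset.Iio i, (X - C (ξ i'')) ^ t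

private lemma qaux_monic {L : Type*} [Field L] {s : ℕ} (t : ℕ) (ξ : Fin s → L) (i : Fin s)
    (l : ℕ) : (qaux t ξ i l).Monic :=
  ((monic_X_sub_C _).pow _).mul
    (monic_prod_of_monic _ _ fun _ _ => (monic_X_sub_C _).pow _)

private lemma qaux_natDegree {L : Type*} [Field L] {s : ℕ} (t : ℕ) (ξ : Fin s → L) (i : Fin s)
    (l : ℕ) : (qaux t ξ i l).natDegree = l + t * (i : ℕ) := by
  rw [qaux, Monic.natDegree_mul ((monic_X_sub_C _).pow _)
      (monic_prod_of_monic _ _ fun _ _ => (monic_X_sub_C _).pow _),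
    natDegree_pow, natDegree_X_sub_C, mul_one,
    natDegree_prod _ _ fun i'' _ => pow_ne_zero _ (X_sub_C_ne_zero _)]
  simp [natDegree_pow, Finset.sum_const, Fin.card_Iio, mul_comm]

theorem stmt_19 (L : Type*) [Field L] (s t m : ℕ) (hs : 0 < s) (ht : 0 < t)
    (hm : s * t ≤ m) (Q : Polynomial L) (ξ : Fin s → L) (hξ : Function.Injective ξ) :
    ∃ ε : L, (ε = 1 ∨ ε = -1) ∧
      ∀ P : Fin m → Polynomial L, (∀ r, (P r).natDegree ≤ m - 1) →
        Matrix.det (Matrix.of fun r k : Fin m =>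
            if _ : (k : ℕ) < s * t then
              (Polynomial.hasseDeriv ((k : ℕ) / s) (Q * P r)).eval
                (ξ ⟨(k : ℕ) % s, Nat.mod_lt _ hs⟩)
            else (P r).coeff (k : ℕ)) =
          ε * (∏ p ∈ Finset.univ.filter fun p : Fin s × Fin s => p.1 < p.2,
              (ξ p.2 - ξ p.1)) ^ (t ^ 2) *
            (∏ i, Q.eval (ξ i)) ^ t *
            Matrix.det (Matrix.of fun r k : Fin m => (P r).coeff (k : ℕ)) := by
  classical
  have hn0 : 0 < s * t := Nat.mul_pos hs ht
  have hm0 : 0 < m := lt_of_lt_of_le hn0 hm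
  set n := s * t with hn
  -- ℕ-indexed entry functions
  set Bfun : ℕ → ℕ → L := fun c k =>
    (Polynomial.hasseDeriv (k / s) (Q * X ^ c)).eval (ξ ⟨k % s, Nat.mod_lt _ hs⟩) with hBfun
  set Afun : ℕ → ℕ → L := fun c k =>
    if k < n then Bfun c k else if c = k then 1 else 0 with hAfun
  set A : Matrix (Fin m) (Fin m) L := Matrix.of fun c k => Afun (c : ℕ) (k : ℕ) with hA
  set B : Matrix (Fin n) (Fin n) L := Matrix.of fun c k => Bfun (c : ℕ) (k : ℕ) with hB
  -- the polynomials q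
  have hdiv : ∀ a : Fin n, (a : ℕ) / t < s := fun a =>
    (Nat.div_lt_iff_lt_mul ht).mpr (by have := a.isLt; omega)
  set q : Fin n → L[X] := fun a => qaux t ξ ⟨(a : ℕ) / t, hdiv a⟩ ((a : ℕ) % t) with hq
  have hqdeg : ∀ a : Fin n, (q a).natDegree = (a : ℕ) := by
    intro a
    rw [hq]
    simp only
    rw [qaux_natDegree]
    exact Nat.mod_add_div _ _
  have hqmonic : ∀ a : Fin n, (q a).Monic := fun a => qaux_monic _ _ _ _
  set T : Matrix (Fin n) (Fin n) L := Matrix.of fun a c => (q a).coeff (c : ℕ) with hT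
  set W : Matrix (Fin n) (Fin n) L := Matrix.of fun a k =>
    (Polynomial.hasseDeriv ((k : ℕ) / s) (Q * q a)).eval
      (ξ ⟨(k : ℕ) % s, Nat.mod_lt _ hs⟩) with hW
  have hTB : T * B = W := by
    ext a k
    rw [Matrix.mul_apply]
    show (∑ c : Fin n, (q a).coeff (c : ℕ) * Bfun (c : ℕ) (k : ℕ)) = _
    rw [Fin.sum_univ_eq_sum_range (fun c => (q a).coeff c * Bfun c (k : ℕ)) n]
    rw [hBfun]
    simp only
    rw [← hasse_expand n ((k : ℕ) / s) _ Q (q a) (by rw [hqdeg]; exact a.isLt)]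
    rfl
  have hdetT : T.det = 1 := by
    have htri : T.BlockTriangular OrderDual.toDual := by
      intro a c hlt
      have hac : (a : ℕ) < (c : ℕ) := hlt
      have hdeg2 : (q a).natDegree < (c : ℕ) := by rw [hqdeg]; exact hac
      exact Polynomial.coeff_eq_zero_of_natDegree_lt hdeg2
    rw [Matrix.det_of_lowerTriangular T htri]
    refine Finset.prod_eq_one fun a _ => ?_
    show (q a).coeff (a : ℕ) = 1
    have := (hqmonic a).coeff_natDegree
    rwa [hqdeg] at this
  -- equivalences
  set e1 : Fin s × Fin t ≃ Fin n := finProdFinEquiv with he1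
  set e2 : Fin s × Fin t ≃ Fin n :=
    (Equiv.prodComm (Fin s) (Fin t)).trans (finProdFinEquiv.trans (finCongr (mul_comm t s)))
    with he2
  set τ : Equiv.Perm (Fin n) := e1.symm.trans e2 with hτ
  have he1v : ∀ (i : Fin s) (l : Fin t), ((e1 (i, l) : Fin n) : ℕ) = (l : ℕ) + t * (i : ℕ) :=
    fun i l => rfl
  have hτv : ∀ (i : Fin s) (l : Fin t),
      ((τ (e1 (i, l)) : Fin n) : ℕ) = (i : ℕ) + s * (l : ℕ) := by
    intro i l
    rw [hτ, Equiv.trans_apply, Equiv.symm_apply_apply]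
    rfl
  have hqval : ∀ (i : Fin s) (l : Fin t), q (e1 (i, l)) = qaux t ξ i l := by
    intro i l
    rw [hq]
    simp only
    congr 1
    · apply Fin.ext
      show ((l : ℕ) + t * (i : ℕ)) / t = (i : ℕ)
      rw [Nat.add_mul_div_left _ _ ht, Nat.div_eq_of_lt l.isLt, Nat.zero_add]
    · show ((l : ℕ) + t * (i : ℕ)) % t = (l : ℕ)
      rw [Nat.add_mul_mod_self_left, Nat.mod_eq_of_lt l.isLt]
  set W' : Matrix (Fin n) (Fin n) L := W.submatrix id τ with hW'
  -- the generic entry formula for W'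
  have hW'entry : ∀ (i' : Fin s) (l : Fin t) (i : Fin s) (j : Fin t),
      W' (e1 (i', l)) (e1 (i, j))
        = (Polynomial.hasseDeriv (j : ℕ) (Q * qaux t ξ i' l)).eval (ξ i) := by
    intro i' l i j
    show W (e1 (i', l)) (τ (e1 (i, j))) = _
    rw [hW]
    show (Polynomial.hasseDeriv (((τ (e1 (i, j)) : Fin n) : ℕ) / s) (Q * q (e1 (i', l)))).eval
        (ξ ⟨((τ (e1 (i, j)) : Fin n) : ℕ) % s, Nat.mod_lt _ hs⟩) = _
    have h1 : ((τ (e1 (i, j)) : Fin n) : ℕ) / s = (j : ℕ) := by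
      rw [hτv, Nat.add_mul_div_left _ _ hs, Nat.div_eq_of_lt i.isLt, Nat.zero_add]
    have h2 : (⟨((τ (e1 (i, j)) : Fin n) : ℕ) % s, Nat.mod_lt _ hs⟩ : Fin s) = i := by
      apply Fin.ext
      show ((τ (e1 (i, j)) : Fin n) : ℕ) % s = (i : ℕ)
      rw [hτv, Nat.add_mul_mod_self_left, Nat.mod_eq_of_lt i.isLt]
    rw [h1, h2, hqval]
  have hW'tri : W'.BlockTriangular id := by
    intro a k hk
    obtain ⟨⟨i, j⟩, rfl⟩ := e1.surjective k
    obtain ⟨⟨i', l⟩, rfl⟩ := e1.surjective a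
    have hval : (j : ℕ) + t * (i : ℕ) < (l : ℕ) + t * (i' : ℕ) := hk
    rw [hW'entry]
    rcases lt_trichotomy i i' with hii | hii | hii
    · refine hasse_eval_zero _ _ _ t j.isLt ?_
      refine Dvd.dvd.mul_left ?_ Q
      rw [qaux]
      exact Dvd.dvd.mul_left
        (Finset.dvd_prod_of_mem (fun i'' => (X - C (ξ i'')) ^ t) (Finset.mem_Iio.mpr hii)) _
    · subst hii
      have hjl : (j : ℕ) < (l : ℕ) := by omega
      refine hasse_eval_zero _ _ _ (l : ℕ) hjl ?_
      refine Dvd.dvd.mul_left ?_ Q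
      rw [qaux]
      exact dvd_mul_right _ _
    · exfalso
      have h2 : t * (i' : ℕ) + t ≤ t * (i : ℕ) := by
        rw [← Nat.mul_succ]
        exact Nat.mul_le_mul_left t hii
      have := l.isLt
      omega
  have hdiag : ∀ (i : Fin s) (l : Fin t),
      W' (e1 (i, l)) (e1 (i, l))
        = Q.eval (ξ i) * ∏ i'' ∈ Finset.Iio i, (ξ i - ξ i'') ^ t := by
    intro i l
    rw [hW'entry]
    have : Q * qaux t ξ i l
        = (X - C (ξ i)) ^ (l : ℕ) * (Q * ∏ i'' ∈ Finset.Iio i, (X - C (ξ i'')) ^ t) := by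
      rw [qaux]; ring
    rw [this, hasse_eval_diag]
    rw [eval_mul, eval_prod]
    simp [eval_pow]
  -- pair product rewriting
  have hpairs : (∏ p ∈ Finset.univ.filter fun p : Fin s × Fin s => p.1 < p.2,
        (ξ p.2 - ξ p.1))
      = ∏ i : Fin s, ∏ i'' ∈ Finset.Iio i, (ξ i - ξ i'') := by
    rw [Finset.prod_filter, Fintype.prod_prod_type, Finset.prod_comm]
    refine Finset.prod_congr rfl fun i _ => ?_
    have hIio : Finset.Iio i = Finset.univ.filter fun x : Fin s => x < i := by
      ext x; simp
    rw [hIio, Finset.prod_filter]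
  have hdetW' : W'.det
      = (∏ i, Q.eval (ξ i)) ^ t
        * (∏ p ∈ Finset.univ.filter fun p : Fin s × Fin s => p.1 < p.2,
            (ξ p.2 - ξ p.1)) ^ t ^ 2 := by
    rw [Matrix.det_of_upperTriangular hW'tri]
    rw [← Equiv.prod_comp e1 fun a => W' a a]
    rw [Fintype.prod_prod_type]
    have : ∀ i : Fin s, (∏ l : Fin t, W' (e1 (i, l)) (e1 (i, l)))
        = (Q.eval (ξ i) * ∏ i'' ∈ Finset.Iio i, (ξ i - ξ i'') ^ t) ^ t := by
      intro i
      rw [Finset.prod_congr rfl fun l _ => hdiag i l]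
      rw [Finset.prod_const, Finset.card_univ, Fintype.card_fin]
    rw [Finset.prod_congr rfl fun i _ => this i]
    simp only [mul_pow]
    rw [Finset.prod_mul_distrib, Finset.prod_pow]
    congr 1
    have inner : ∀ i : Fin s, (∏ i'' ∈ Finset.Iio i, (ξ i - ξ i'') ^ t) ^ t
        = ∏ i'' ∈ Finset.Iio i, (ξ i - ξ i'') ^ t ^ 2 := by
      intro i
      rw [← Finset.prod_pow]
      exact Finset.prod_congr rfl fun i'' _ => by rw [← pow_mul, pow_two]
    rw [Finset.prod_congr rfl fun i _ => inner i, hpairs, ← Finset.prod_pow]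
    exact Finset.prod_congr rfl fun i _ => (Finset.prod_pow _ _ _)
  -- sign
  obtain ⟨ε, hε, hdetW : W.det = ε * W'.det⟩ :
      ∃ ε : L, (ε = 1 ∨ ε = -1) ∧ W.det = ε * W'.det := by
    have hp := Matrix.det_permute' τ W
    rw [← hW'] at hp
    rcases Int.units_eq_one_or (Equiv.Perm.sign τ) with h | h <;> rw [h] at hp
    · exact ⟨1, Or.inl rfl, by rw [one_mul, hp]; simp⟩
    · refine ⟨-1, Or.inr rfl, ?_⟩
      simp only [Units.val_neg, Units.val_one, Int.cast_neg, Int.cast_one, neg_mul, one_mul]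
        at hp
      rw [hp]; ring
  have hdetB : B.det = ε * W'.det := by
    have : (T * B).det = W.det := by rw [hTB]
    rw [Matrix.det_mul, hdetT, one_mul] at this
    rw [this, hdetW]
  -- block decomposition: det A = det B
  have hdetA : A.det = B.det := by
    have hmn : n + (m - n) = m := Nat.add_sub_cancel' hm
    set e : Fin n ⊕ Fin (m - n) ≃ Fin m := finSumFinEquiv.trans (finCongr hmn) with he
    have hvl : ∀ k : Fin n, ((e (Sum.inl k) : Fin m) : ℕ) = (k : ℕ) := by
      intro k; simp [he]
    have hvr : ∀ k : Fin (m - n), ((e (Sum.inr k) : Fin m) : ℕ) = n + (k : ℕ) := by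
      intro k; simp [he]
    rw [← Matrix.det_submatrix_equiv_self e A]
    have hblocks : A.submatrix e e
        = Matrix.fromBlocks B 0
            (Matrix.of fun (c : Fin (m - n)) (k : Fin n) => Bfun (n + (c : ℕ)) (k : ℕ)) 1 := by
      ext c k
      cases c with
      | inl c =>
        cases k with
        | inl k =>
          show Afun _ _ = B c k
          rw [hvl, hvl, hAfun]
          simp only
          rw [if_pos k.isLt]
          rfl
        | inr k =>
          show Afun _ _ = 0
          rw [hvl, hvr, hAfun]
          simp only
          rw [if_neg (by omega), if_neg (by have := c.isLt; omega)]
      | inr c =>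
        cases k with
        | inl k =>
          show Afun _ _ = Bfun (n + (c : ℕ)) (k : ℕ)
          rw [hvr, hvl, hAfun]
          simp only
          rw [if_pos k.isLt]
        | inr k =>
          show Afun _ _ = (1 : Matrix (Fin (m - n)) (Fin (m - n)) L) c k
          rw [hvr, hvr, hAfun]
          simp only
          rw [if_neg (by omega), Matrix.one_apply]
          by_cases h : c = k
          · subst h; simp
          · rw [if_neg (fun hc => h (Fin.ext (by omega))), if_neg h]
    rw [hblocks, Matrix.det_fromBlocks_zero₁₂, Matrix.det_one, mul_one]
  -- final assembly
  refine ⟨ε, hε, fun P hP => ?_⟩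
  have hfact : (Matrix.of fun r k : Fin m =>
      if _ : (k : ℕ) < s * t then
        (Polynomial.hasseDeriv ((k : ℕ) / s) (Q * P r)).eval
          (ξ ⟨(k : ℕ) % s, Nat.mod_lt _ hs⟩)
      else (P r).coeff (k : ℕ))
      = (Matrix.of fun r c : Fin m => (P r).coeff (c : ℕ)) * A := by
    ext r k
    rw [Matrix.mul_apply]
    show _ = ∑ c : Fin m, (P r).coeff (c : ℕ) * Afun (c : ℕ) (k : ℕ)
    by_cases h : (k : ℕ) < n
    · rw [Matrix.of_apply, dif_pos h]
      have hdeg : (P r).natDegree < m := lt_of_le_of_lt (hP r) (Nat.sub_lt hm0 one_pos)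
      rw [hasse_expand m ((k : ℕ) / s) _ Q (P r) hdeg]
      rw [← Fin.sum_univ_eq_sum_range
        (fun c => (P r).coeff c * (Polynomial.hasseDeriv ((k : ℕ) / s) (Q * X ^ c)).eval
          (ξ ⟨(k : ℕ) % s, Nat.mod_lt _ hs⟩)) m]
      refine Finset.sum_congr rfl fun c _ => ?_
      rw [hAfun]
      simp only
      rw [if_pos h]
    · rw [Matrix.of_apply, dif_neg h]
      have hterm : ∀ c : Fin m, (P r).coeff (c : ℕ) * Afun (c : ℕ) (k : ℕ)
          = if c = k then (P r).coeff (k : ℕ) else 0 := by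
        intro c
        rw [hAfun]
        simp only
        rw [if_neg h]
        by_cases hc : c = k
        · subst hc; simp
        · rw [if_neg (fun hv => hc (Fin.ext hv)), mul_zero, if_neg hc]
      rw [Finset.sum_congr rfl fun c _ => hterm c, Finset.sum_ite_eq' Finset.univ k]
      simp
  rw [hfact, Matrix.det_mul, hdetA, hdetB, hdetW']
  ring
end
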